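/- arXiv:2411.13758 — 11 statements merged into one kernel-verified Lean document; each statement's English description precedes it below -/
import Mathlib

section
/- Let $Q=\{(x,u)\in X\times\mathbb{R}^{N_1} : u_i-u_j+\sum_{kl\in A}\alpha^{ij}_{kl}x_{kl}\le\beta^{ij}\ \text{for all}\ ij\in A_1\}$ where $X\subseteq\mathbb{R}^A$, $\alpha^{ij}\in\mathbb{R}^A$, $\beta^{ij}\in\mathbb{R}$. Then the projection of $Q$ onto the $x$-variables equals $P=\{x\in X : \sum_{ij\in C}\sum_{kl\in A}\alpha^{ij}_{kl}x_{kl}\le\sum_{ij\in C}\beta^{ij}\ \text{for all directed cycles}\ C\in\mathcal{C}_1\}$. -/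
/-- Weight of a directed cycle given by nodes `v 0, …, v (k-1)` with arcs
`(v i, v ((i+1) % k))`. -/
def cycleSum {α : Type} (c : α → α → ℝ) (k : ℕ) (v : ℕ → α) : ℝ :=
  ∑ i ∈ Finset.range k, c (v i) (v ((i + 1) % k))

/-- A directed cycle: at least two distinct nodes `v 0, …, v (k-1)`. -/
def IsCycle {α : Type} (k : ℕ) (v : ℕ → α) : Prop :=
  2 ≤ k ∧ ∀ i < k, ∀ j < k, v i = v j → i = j

/-- A directed cycle avoiding node `0` (the paper's node 1), i.e. a member of `𝒞₁`. -/
def IsCycle1 {n : ℕ} (k : ℕ) (v : ℕ → Fin (n + 1)) : Prop :=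
  IsCycle k v ∧ ∀ i < k, v i ≠ 0

/-- The (restricted) assignment polytope `P_AP`. -/
def memPAP {n : ℕ} (x : Fin (n + 1) → Fin (n + 1) → ℝ) : Prop :=
  (∀ i j : Fin (n + 1), i ≠ j → 0 ≤ x i j ∧ x i j ≤ 1) ∧
  (∀ i : Fin (n + 1), ∑ j ∈ Finset.univ.erase i, x i j = 1) ∧
  (∀ i : Fin (n + 1), ∑ j ∈ Finset.univ.erase i, x j i = 1)

/-!
With `c i j = β i j - ∑ α i j k l * x k l`, the constraints of `Q` say that `u` is a potential:
`u i ≤ c i j + u j`. Summed around a cycle the potentials telescope, so a potential forces every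
cycle of `𝒞₁` to have nonnegative `c`-cost. Conversely, without negative cycles the cost of a
cheapest simple path starting at `i` is a potential: prepending the arc `ij` to a cheapest path
from `j` gives a path from `i`, and if `i` already lies on it, the cycle closed by `ij` has
nonnegative cost, so the tail starting at `i` is cheaper still.
-/

open Finset

theorem Finset.sum_range_succ_mod {M : Type*} [AddCommMonoid M] (f : ℕ → M) (k : ℕ) :
    ∑ i ∈ range k, f ((i + 1) % k) = ∑ i ∈ range k, f i := by
  cases k with
  | zero => simp
  | succ m =>
    rw [sum_range_succ, Nat.mod_self, sum_range_succ' f]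
    congr 1
    refine sum_congr rfl fun i hi => ?_
    rw [Nat.mod_eq_of_lt (by simp at hi; omega)]

theorem List.getD_append_singleton_self {α : Type*} (L : List α) (a : α) (j : ℕ) :
    (L ++ [a]).getD j a = L.getD j a := by
  rcases lt_or_ge j L.length with h | h
  · exact List.getD_append _ _ _ _ h
  · rw [List.getD_append_right _ _ _ _ h, List.getD_eq_default _ _ h]
    rcases (j - L.length).eq_zero_or_pos with h' | h'
    · rw [h']; rfl
    · exact List.getD_eq_default _ _ (by simp; omega)

section Potentials

variable {V : Type} (c : V → V → ℝ)

theorem IsCycle.ne_succ_mod {k : ℕ} {v : ℕ → V} (hv : IsCycle k v) {i : ℕ} (hi : i < k) :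
    v i ≠ v ((i + 1) % k) := by
  obtain ⟨hk, hinj⟩ := hv
  intro h
  have := hinj i hi _ (Nat.mod_lt _ (by omega)) h
  rcases Nat.lt_or_ge (i + 1) k with h' | h'
  · rw [Nat.mod_eq_of_lt h'] at this; omega
  · rw [show i + 1 = k by omega, Nat.mod_self] at this; omega

theorem cycleSum_nonneg_of_potential {S : Set V} {u : V → ℝ}
    (hu : ∀ i ∈ S, ∀ j ∈ S, i ≠ j → u i ≤ c i j + u j) {k : ℕ} {v : ℕ → V}
    (hv : IsCycle k v) (hS : ∀ i < k, v i ∈ S) : 0 ≤ cycleSum c k v := by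
  have hk : 0 < k := by have := hv.1; omega
  calc (0 : ℝ) = ∑ i ∈ range k, (u (v i) - u (v ((i + 1) % k))) := by
        rw [sum_sub_distrib, sum_range_succ_mod (fun i => u (v i)), sub_self]
    _ ≤ cycleSum c k v := by
        refine sum_le_sum fun i hi => ?_
        rw [mem_range] at hi
        linarith [hu _ (hS i hi) _ (hS _ (Nat.mod_lt _ hk)) (hv.ne_succ_mod hi)]

def pathCost : List V → ℝ
  | [] => 0
  | [_] => 0
  | a :: b :: t => c a b + pathCost (b :: t)

theorem pathCost_cons_cons (a b : V) (t : List V) :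
    pathCost c (a :: b :: t) = c a b + pathCost c (b :: t) := rfl

theorem pathCost_append (p : List V) (y : V) (q : List V) :
    pathCost c (p ++ y :: q) = pathCost c (p ++ [y]) + pathCost c (y :: q) := by
  induction p with
  | nil => simp [pathCost]
  | cons a p ih =>
    cases p with
    | nil => simp [pathCost]
    | cons b p =>
      simp only [List.cons_append, pathCost_cons_cons] at ih ⊢
      rw [ih, add_assoc]

theorem pathCost_eq_sum_getD (d : V) (l : List V) :
    pathCost c l = ∑ j ∈ range (l.length - 1), c (l.getD j d) (l.getD (j + 1) d) := by
  induction l with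
  | nil => simp [pathCost]
  | cons a t ih =>
    cases t with
    | nil => simp [pathCost]
    | cons b t =>
      rw [pathCost_cons_cons, ih]
      simp only [List.length_cons, Nat.add_sub_cancel]
      rw [sum_range_succ', add_comm]
      simp

theorem isCycle_getD {L : List V} (hL : L.Nodup) (h2 : 2 ≤ L.length) (d : V) :
    IsCycle L.length (fun j => L.getD j d) := by
  refine ⟨h2, fun i hi j hj hij => ?_⟩
  simp only [List.getD_eq_getElem _ _ hi, List.getD_eq_getElem _ _ hj] at hij
  exact hL.getElem_inj_iff.mp hij

theorem cycleSum_getD_eq_pathCost (L : List V) (a : V) (hL : L.getD 0 a = a) :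
    cycleSum c L.length (fun j => L.getD j a) = pathCost c (L ++ [a]) := by
  rw [pathCost_eq_sum_getD c a, cycleSum, List.length_append, List.length_singleton,
    Nat.add_sub_cancel]
  refine sum_congr rfl fun j hj => ?_
  rw [mem_range] at hj
  simp only [List.getD_append_singleton_self]
  rcases Nat.lt_or_ge (j + 1) L.length with h | h
  · rw [Nat.mod_eq_of_lt h]
  · rw [show j + 1 = L.length by omega, Nat.mod_self, hL, List.getD_eq_default _ _ le_rfl]

theorem pathCost_cycle_nonneg (hc : ∀ k v, IsCycle k v → 0 ≤ cycleSum c k v) {a : V}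
    {t : List V} (hnd : (a :: t).Nodup) (ht : t ≠ []) : 0 ≤ pathCost c (a :: t ++ [a]) := by
  rw [← cycleSum_getD_eq_pathCost c (a :: t) a rfl]
  refine hc _ _ (isCycle_getD hnd ?_ a)
  cases t
  · contradiction
  · simp

/-- Shortcutting: if `i` already lies on `l`, dropping the part of `l` before `i` costs at most
`c i j`, because that part closes up with the arc `ij` to a cycle of nonnegative cost. -/
theorem exists_pathCost_le_cons (hc : ∀ k v, IsCycle k v → 0 ≤ cycleSum c k v) {i j : V}
    (hij : i ≠ j) {l : List V} (hl : l.head? = some j) (hnd : l.Nodup) :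
    ∃ l', l'.head? = some i ∧ l'.Nodup ∧ pathCost c l' ≤ c i j + pathCost c l := by
  obtain ⟨t, rfl⟩ : ∃ t, l = j :: t := by
    cases l with
    | nil => simp at hl
    | cons a t => exact ⟨t, by simpa using hl⟩
  by_cases hi : i ∈ j :: t
  · obtain ⟨p, q, hpq⟩ := List.append_of_mem hi
    obtain ⟨p, rfl⟩ : ∃ p', p = j :: p' := by
      cases p with
      | nil => exact absurd (List.cons_eq_cons.mp hpq.symm).1 hij
      | cons a p => exact ⟨p, by rw [(List.cons_eq_cons.mp hpq).1]⟩
    rw [hpq] at hnd ⊢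
    obtain ⟨hp, hq, hdisj⟩ := List.nodup_append.mp hnd
    have hcycle := pathCost_cycle_nonneg c hc
      (List.nodup_cons.mpr ⟨fun h => hdisj i h i List.mem_cons_self rfl, hp⟩)
      (List.cons_ne_nil j p)
    refine ⟨i :: q, rfl, hq, ?_⟩
    rw [pathCost_append]
    simp only [List.cons_append, pathCost_cons_cons] at hcycle ⊢
    linarith
  · exact ⟨i :: j :: t, rfl, List.nodup_cons.mpr ⟨hi, hnd⟩, le_rfl⟩

theorem exists_pathCost_min [Finite V] (i : V) :
    ∃ l : List V, l.head? = some i ∧ l.Nodup ∧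
      ∀ l' : List V, l'.head? = some i → l'.Nodup → pathCost c l ≤ pathCost c l' := by
  cases nonempty_fintype V
  have hfin : {l : List V | l.head? = some i ∧ l.Nodup}.Finite :=
    (Set.finite_coe_iff.mp (inferInstanceAs (Finite {l : List V // l.Nodup}))).subset
      fun _ hl => hl.2
  obtain ⟨l, hl, hmin⟩ :=
    Set.exists_min_image _ (pathCost c) hfin ⟨[i], rfl, List.nodup_singleton i⟩
  exact ⟨l, hl.1, hl.2, fun l' hl' hnd' => hmin l' ⟨hl', hnd'⟩⟩

theorem exists_potential_of_cycleSum_nonneg [Finite V]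
    (hc : ∀ k v, IsCycle k v → 0 ≤ cycleSum c k v) :
    ∃ u : V → ℝ, ∀ i j, i ≠ j → u i ≤ c i j + u j := by
  choose path hhead hnd hmin using exists_pathCost_min c
  refine ⟨fun i => pathCost c (path i), fun i j hij => ?_⟩
  obtain ⟨l, hl, hndl, hle⟩ := exists_pathCost_le_cons c hc hij (hhead j) (hnd j)
  exact (hmin i l hl hndl).trans hle

theorem exists_potential_on_iff [Finite V] (S : Set V) :
    (∃ u : V → ℝ, ∀ i ∈ S, ∀ j ∈ S, i ≠ j → u i ≤ c i j + u j) ↔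
      ∀ k v, IsCycle k v → (∀ i < k, v i ∈ S) → 0 ≤ cycleSum c k v := by
  refine ⟨fun ⟨u, hu⟩ k v hv hS => cycleSum_nonneg_of_potential c hu hv hS, fun h => ?_⟩
  obtain ⟨u, hu⟩ := exists_potential_of_cycleSum_nonneg (fun i j : S => c i j) fun k v hv =>
    h k (fun i => v i) ⟨hv.1, fun i hi j hj hij => hv.2 i hi j hj (Subtype.ext hij)⟩
      fun i _ => (v i).2
  classical
  refine ⟨fun i => if hi : i ∈ S then u ⟨i, hi⟩ else 0, fun i hi j hj hij => ?_⟩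
  simp only [dif_pos hi, dif_pos hj]
  exact hu ⟨i, hi⟩ ⟨j, hj⟩ (Subtype.coe_ne_coe.mp hij)

end Potentials

theorem stmt_1_general (n : ℕ)
    (X : (Fin (n + 1) → Fin (n + 1) → ℝ) → Prop)
    (α : Fin (n + 1) → Fin (n + 1) → Fin (n + 1) → Fin (n + 1) → ℝ)
    (β : Fin (n + 1) → Fin (n + 1) → ℝ)
    (x : Fin (n + 1) → Fin (n + 1) → ℝ) :
    (X x ∧ ∃ u : Fin (n + 1) → ℝ, ∀ i j : Fin (n + 1), i ≠ 0 → j ≠ 0 → i ≠ j →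
        u i - u j + ∑ k : Fin (n + 1), ∑ l ∈ Finset.univ.erase k, α i j k l * x k l ≤ β i j)
    ↔ (X x ∧ ∀ (k : ℕ) (v : ℕ → Fin (n + 1)), IsCycle1 k v →
        ∑ i ∈ Finset.range k,
            (∑ p : Fin (n + 1), ∑ q ∈ Finset.univ.erase p,
              α (v i) (v ((i + 1) % k)) p q * x p q)
          ≤ ∑ i ∈ Finset.range k, β (v i) (v ((i + 1) % k))) := by
  set w : Fin (n + 1) → Fin (n + 1) → ℝ := fun i j =>
    ∑ p : Fin (n + 1), ∑ q ∈ Finset.univ.erase p, α i j p q * x p q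
  refine and_congr_right fun _ => ?_
  calc _ ↔ ∃ u : Fin (n + 1) → ℝ, ∀ i ∈ {i | i ≠ 0}, ∀ j ∈ {i | i ≠ 0}, i ≠ j →
          u i ≤ β i j - w i j + u j :=
        exists_congr fun u => ⟨fun h i hi j hj hij => by linarith [h i j hi hj hij],
          fun h i j hi hj hij => by linarith [h i hi j hj hij]⟩
    _ ↔ _ := exists_potential_on_iff (fun i j => β i j - w i j) {i | i ≠ 0}
    _ ↔ _ := by simp only [IsCycle1, and_imp, cycleSum, sum_sub_distrib, sub_nonneg]; rfl

/-- Projection lemma: the projection of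
`Q = {(x,u) : x ∈ X, uᵢ - uⱼ + ∑_{kl∈A} α^{ij}_{kl} x_{kl} ≤ β^{ij} ∀ ij ∈ A₁}`
onto the `x`-variables is the set cut out by the corresponding cycle inequalities. -/
theorem stmt_1 (n : ℕ) (hn : 4 ≤ n + 1)
    (X : (Fin (n + 1) → Fin (n + 1) → ℝ) → Prop)
    (α : Fin (n + 1) → Fin (n + 1) → Fin (n + 1) → Fin (n + 1) → ℝ)
    (β : Fin (n + 1) → Fin (n + 1) → ℝ)
    (x : Fin (n + 1) → Fin (n + 1) → ℝ) :
    (X x ∧ ∃ u : Fin (n + 1) → ℝ, ∀ i j : Fin (n + 1), i ≠ 0 → j ≠ 0 → i ≠ j →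
        u i - u j + ∑ k : Fin (n + 1), ∑ l ∈ Finset.univ.erase k, α i j k l * x k l ≤ β i j)
    ↔ (X x ∧ ∀ (k : ℕ) (v : ℕ → Fin (n + 1)), IsCycle1 k v →
        ∑ i ∈ Finset.range k,
            (∑ p : Fin (n + 1), ∑ q ∈ Finset.univ.erase p,
              α (v i) (v ((i + 1) % k)) p q * x p q)
          ≤ ∑ i ∈ Finset.range k, β (v i) (v ((i + 1) % k))) :=
  stmt_1_general n X α β x
end

section
/- For each cycle $C\in\mathcal{C}_1$, the point $d = \frac{1}{|C|-1}\mathbf{1}_C$ (value $1/(|C|-1)$ on arcs of $C$ and $0$ elsewhere) satisfies all the inequalities defining $\overline{D}$ except the one associated to $C$, which it violates; hence each inequality $\sum_{ij\in C}d_{ij}\le 1$ is non-redundant in the description of $\overline{D}$. -/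
/-- Arc `(a, b)` belongs to the cycle `(k, v)`. -/
def inCycle {n : ℕ} (k : ℕ) (v : ℕ → Fin (n + 1)) (a b : Fin (n + 1)) : Prop :=
  ∃ i < k, v i = a ∧ v ((i + 1) % k) = b

/-- For a cycle `Ĉ ∈ 𝒞₁`, the point `d = (1/(|Ĉ|-1)) 𝟙_Ĉ` satisfies all inequalities
defining `D̄` except the one associated to `Ĉ`, which it violates. -/
theorem stmt_4 (n : ℕ) (hn : 4 ≤ n + 1) (k : ℕ) (v : ℕ → Fin (n + 1))
    (hC : IsCycle1 k v)
    (d : Fin (n + 1) → Fin (n + 1) → ℝ)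
    (hd : ∀ a b : Fin (n + 1),
      (inCycle k v a b → d a b = 1 / ((k : ℝ) - 1)) ∧
      (¬ inCycle k v a b → d a b = 0)) :
    (∀ a b : Fin (n + 1), 0 ≤ d a b) ∧
    (∀ (k' : ℕ) (v' : ℕ → Fin (n + 1)), IsCycle1 k' v' →
      ¬ (∀ a b : Fin (n + 1), inCycle k' v' a b ↔ inCycle k v a b) →
      cycleSum d k' v' ≤ 1) ∧
    1 < cycleSum d k v := by
  classical
  obtain ⟨⟨hk2, hvinj⟩, _⟩ := hC
  have hkpos : (0:ℝ) < (k:ℝ) - 1 := by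
    have h2 : (2:ℝ) ≤ (k:ℝ) := by exact_mod_cast hk2
    linarith
  have hdnn : ∀ a b : Fin (n + 1), 0 ≤ d a b := by
    intro a b
    by_cases h : inCycle k v a b
    · rw [(hd a b).1 h]; positivity
    · rw [(hd a b).2 h]
  refine ⟨hdnn, ?_, ?_⟩
  · -- other cycles
    intro k' v' hC' hne
    obtain ⟨⟨hk2', hvinj'⟩, _⟩ := hC'
    have hk'pos : 0 < k' := by omega
    set S : Finset ℕ := (Finset.range k').filter
      (fun i => inCycle k v (v' i) (v' ((i + 1) % k'))) with hS
    have hmemS : ∀ i, i ∈ S ↔ i < k' ∧ inCycle k v (v' i) (v' ((i + 1) % k')) := by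
      intro i; simp [hS]
    -- sum formula
    have hsum : cycleSum d k' v' = S.card * (1 / ((k:ℝ) - 1)) := by
      have h1 : cycleSum d k' v'
          = ∑ i ∈ Finset.range k',
              if inCycle k v (v' i) (v' ((i+1)%k')) then 1/((k:ℝ)-1) else 0 := by
        apply Finset.sum_congr rfl
        intro i _
        by_cases h : inCycle k v (v' i) (v' ((i+1)%k'))
        · rw [(hd _ _).1 h, if_pos h]
        · rw [(hd _ _).2 h, if_neg h]
      rw [h1, ← Finset.sum_filter, ← hS, Finset.sum_const, nsmul_eq_mul]
    -- witness function
    let f : ℕ → ℕ := fun i =>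
      if h : ∃ j, j < k ∧ v j = v' i ∧ v ((j+1)%k) = v' ((i+1)%k') then h.choose else 0
    have hf : ∀ i ∈ S, f i < k ∧ v (f i) = v' i ∧ v ((f i + 1) % k) = v' ((i+1)%k') := by
      intro i hi
      obtain ⟨-, j, hj⟩ := (hmemS i).1 hi
      have hex : ∃ j, j < k ∧ v j = v' i ∧ v ((j+1)%k) = v' ((i+1)%k') := ⟨j, hj⟩
      simpa only [f, dif_pos hex] using hex.choose_spec
    have hinj : Set.InjOn f S := by
      intro i1 h1 i2 h2 heq
      have e1 := hf i1 h1
      have e2 := hf i2 h2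
      apply hvinj' i1 ((hmemS i1).1 h1).1 i2 ((hmemS i2).1 h2).1
      rw [← e1.2.1, ← e2.2.1, heq]
    have hcardle : S.card ≤ k := by
      have := Finset.card_le_card_of_injOn f (fun i hi => Finset.mem_range.mpr (hf i hi).1) hinj
      simpa using this
    have hcardne : S.card ≠ k := by
      intro hcard
      -- surjectivity of f onto range k
      have himg : Finset.image f S = Finset.range k := by
        apply Finset.eq_of_subset_of_card_le
        · intro j hj
          obtain ⟨i, hi, rfl⟩ := Finset.mem_image.1 hj
          exact Finset.mem_range.mpr (hf i hi).1
        · rw [Finset.card_image_of_injOn hinj, hcard, Finset.card_range]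
      have stepA : ∀ j < k, ∃ i ∈ S, f i = j := by
        intro j hj
        have : j ∈ Finset.image f S := by rw [himg]; exact Finset.mem_range.mpr hj
        exact Finset.mem_image.1 this
      -- every arc of C is an arc of C'
      have stepA' : ∀ j < k, ∃ i < k', v' i = v j ∧ v' ((i+1)%k') = v ((j+1)%k) := by
        intro j hj
        obtain ⟨i, hi, rfl⟩ := stepA j hj
        obtain ⟨hfk, h1, h2⟩ := hf i hi
        exact ⟨i, ((hmemS i).1 hi).1, h1.symm, h2.symm⟩
      -- S closed under cyclic successor
      have stepB : ∀ i ∈ S, (i + 1) % k' ∈ S := by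
        intro i hi
        obtain ⟨hfk, h1, h2⟩ := hf i hi
        have hj2 : (f i + 1) % k < k := Nat.mod_lt _ (by omega)
        obtain ⟨i2, hi2k, e1, e2⟩ := stepA' _ hj2
        have hii : i2 = (i + 1) % k' := by
          apply hvinj' i2 hi2k _ (Nat.mod_lt _ hk'pos)
          rw [e1, h2]
        rw [hii] at e1 e2
        refine (hmemS _).2 ⟨Nat.mod_lt _ hk'pos, (f i + 1) % k, hj2, e1.symm, ?_⟩
        rw [e2]
      -- S = range k'
      have hne0 : S.Nonempty := by
        rw [← Finset.card_pos, hcard]; omega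
      obtain ⟨i0, hi0⟩ := hne0
      have hi0k : i0 < k' := ((hmemS i0).1 hi0).1
      have hiter : ∀ m, (i0 + m) % k' ∈ S := by
        intro m
        induction m with
        | zero => simpa [Nat.mod_eq_of_lt hi0k] using hi0
        | succ m ih =>
          have := stepB _ ih
          have heq : ((i0 + m) % k' + 1) % k' = (i0 + (m+1)) % k' := by
            rw [show i0 + (m+1) = (i0 + m) + 1 from by ring, Nat.add_mod (i0 + m) 1,
              Nat.mod_eq_of_lt (show 1 < k' by omega)]
          rwa [heq] at this
      have hall : ∀ i < k', i ∈ S := by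
        intro i hik
        have h1 : (i0 + (k' - i0 + i)) % k' = i := by
          have : i0 + (k' - i0 + i) = k' + i := by omega
          rw [this, Nat.add_mod_left, Nat.mod_eq_of_lt hik]
        have := hiter (k' - i0 + i)
        rwa [h1] at this
      -- arc sets are equal: contradiction
      apply hne
      intro a b
      constructor
      · rintro ⟨i, hik, rfl, rfl⟩
        exact ((hmemS i).1 (hall i hik)).2
      · rintro ⟨j, hjk, rfl, rfl⟩
        obtain ⟨i, hik, e1, e2⟩ := stepA' j hjk
        exact ⟨i, hik, e1, e2⟩
    -- conclude: S.card ≤ k - 1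
    have hcardR : (S.card : ℝ) ≤ (k:ℝ) - 1 := by
      have : S.card + 1 ≤ k := by omega
      have : ((S.card : ℝ) + 1) ≤ (k:ℝ) := by exact_mod_cast this
      linarith
    rw [hsum]
    have h1 : ((k:ℝ) - 1) * (1 / ((k:ℝ) - 1)) = 1 := by
      field_simp
    calc (S.card : ℝ) * (1 / ((k:ℝ) - 1))
        ≤ ((k:ℝ) - 1) * (1 / ((k:ℝ) - 1)) := by
          apply mul_le_mul_of_nonneg_right hcardR (by positivity)
      _ = 1 := h1
  · -- violation
    have h1 : cycleSum d k v = k * (1 / ((k:ℝ) - 1)) := by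
      unfold cycleSum
      rw [Finset.sum_congr rfl (fun i hi => (hd _ _).1
        ⟨i, Finset.mem_range.1 hi, rfl, rfl⟩), Finset.sum_const, Finset.card_range,
        nsmul_eq_mul]
    rw [h1, mul_one_div, lt_div_iff₀ hkpos]
    linarith
end

section
/- For $d\in\overline{D}$, the projection of $Q_{\mathrm{MTZ}}(d)=\{(x,u)\in P_{\mathrm{AP}}\times\mathbb{R}^{N_1} : u_i-u_j+d_{ij}\le 1-x_{ij}\ \forall ij\in A_1\}$ onto the $x$-variables equals $P_{\mathrm{MTZ}}(d)=\{x\in P_{\mathrm{AP}} : \sum_{ij\in C}x_{ij}\le|C|-\sum_{ij\in C}d_{ij}\ \forall C\in\mathcal{C}_1\}$. -/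
/-- Membership in `D̄ = {d ≥ 0 : ∑_{ij ∈ C} d_{ij} ≤ 1 for all C ∈ 𝒞₁}`. -/
def memDbar {n : ℕ} (d : Fin (n + 1) → Fin (n + 1) → ℝ) : Prop :=
  (∀ i j : Fin (n + 1), i ≠ 0 → j ≠ 0 → i ≠ j → 0 ≤ d i j) ∧
  ∀ (k : ℕ) (v : ℕ → Fin (n + 1)), IsCycle1 k v → cycleSum d k v ≤ 1

variable {α : Type}

section CycleSum

lemma cycleSum_add (f g : α → α → ℝ) (k : ℕ) (v : ℕ → α) :
    cycleSum (fun a b => f a b + g a b) k v = cycleSum f k v + cycleSum g k v :=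
  Finset.sum_add_distrib

lemma cycleSum_sub (f g : α → α → ℝ) (k : ℕ) (v : ℕ → α) :
    cycleSum (fun a b => f a b - g a b) k v = cycleSum f k v - cycleSum g k v :=
  Finset.sum_sub_distrib ..

lemma cycleSum_const (c : ℝ) (k : ℕ) (v : ℕ → α) :
    cycleSum (fun _ _ => c) k v = k * c := by
  simp [cycleSum]

lemma cycleSum_le_cycleSum {f g : α → α → ℝ} {k : ℕ} {v : ℕ → α}
    (h : ∀ i < k, f (v i) (v ((i + 1) % k)) ≤ g (v i) (v ((i + 1) % k))) :
    cycleSum f k v ≤ cycleSum g k v :=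
  Finset.sum_le_sum fun i hi => h i (Finset.mem_range.mp hi)

lemma cycleSum_sub_potential (u : α → ℝ) (k : ℕ) (v : ℕ → α) :
    cycleSum (fun a b => u a - u b) k v = 0 := by
  rw [cycleSum_sub, sub_eq_zero]
  cases k with
  | zero => rfl
  | succ m =>
    simp only [cycleSum]
    rw [Finset.sum_range_succ (fun i => u (v ((i + 1) % (m + 1)))),
      Finset.sum_range_succ' (fun i => u (v i)), Nat.mod_self]
    congr 1
    refine Finset.sum_congr rfl fun i hi => ?_
    rw [Nat.mod_eq_of_lt (by simpa using hi)]

lemma IsCycle.apply_ne_apply_succ {k : ℕ} {v : ℕ → α} (hv : IsCycle k v) {i : ℕ} (hi : i < k) :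
    v i ≠ v ((i + 1) % k) := by
  intro h
  have := hv.2 i hi _ (Nat.mod_lt _ (by omega)) h
  rcases Nat.lt_or_ge (i + 1) k with hlt | hge
  · rw [Nat.mod_eq_of_lt hlt] at this
    omega
  · rw [show i + 1 = k by omega, Nat.mod_self] at this
    have := hv.1
    omega

end CycleSum

section Paths

def pathWeight (w : α → α → ℝ) : List α → ℝ
  | a :: b :: t => w a b + pathWeight w (b :: t)
  | _ => 0

variable (w : α → α → ℝ)

lemma pathWeight_append_cons (Q : List α) (a : α) (R : List α) :
    pathWeight w (Q ++ a :: R) = pathWeight w (Q ++ [a]) + pathWeight w (a :: R) := by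
  induction Q with
  | nil => simp [pathWeight]
  | cons q Q ih =>
    cases Q with
    | nil => simp [pathWeight]
    | cons q' Q => simp only [List.cons_append, pathWeight] at ih ⊢; rw [ih]; ring

lemma pathWeight_eq_sum (z : α) (l : List α) :
    pathWeight w l = ∑ i ∈ Finset.range (l.length - 1), w (l.getD i z) (l.getD (i + 1) z) := by
  induction l with
  | nil => simp [pathWeight]
  | cons a t ih =>
    cases t with
    | nil => simp [pathWeight]
    | cons b s =>
      simp only [pathWeight, ih, List.length_cons, Nat.add_sub_cancel]
      rw [Finset.sum_range_succ']
      simp only [List.getD_cons_succ, List.getD_cons_zero]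
      ring

lemma cycleSum_getD_eq_pathWeight (a : α) (t : List α) (z : α) :
    cycleSum w (a :: t).length (fun i => (a :: t).getD i z) = pathWeight w (a :: t ++ [a]) := by
  rw [pathWeight_eq_sum w z, cycleSum]
  simp only [List.length_append, List.length_singleton, Nat.add_sub_cancel]
  refine Finset.sum_congr rfl fun i hi => ?_
  have hi : i < (a :: t).length := Finset.mem_range.mp hi
  rw [List.getD_append _ _ _ _ hi]
  rcases Nat.lt_or_ge (i + 1) (a :: t).length with hlt | hge
  · rw [Nat.mod_eq_of_lt hlt, List.getD_append _ _ _ _ hlt]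
  · rw [show i + 1 = (a :: t).length by omega, Nat.mod_self,
      List.getD_append_right _ _ _ _ le_rfl, Nat.sub_self]
    rfl

lemma isCycle_getD_s7 {l : List α} (hl : l.Nodup) (hlen : 2 ≤ l.length) (z : α) :
    IsCycle l.length (fun i => l.getD i z) := by
  refine ⟨hlen, fun i hi j hj hij => ?_⟩
  dsimp only at hij
  rw [List.getD_eq_getElem l z hi, List.getD_eq_getElem l z hj] at hij
  exact hl.getElem_inj_iff.mp hij

end Paths

section ShortestPaths

variable (w : α → α → ℝ) (p : α → Prop)

def simplePathsFrom (i : α) : Set (List α) :=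
  {l | (i :: l).Nodup ∧ ∀ a ∈ i :: l, p a}

lemma finite_simplePathsFrom [Fintype α] (i : α) : (simplePathsFrom p i).Finite :=
  (List.finite_length_le α (Fintype.card α)).subset fun _ hl =>
    (List.nodup_cons.mp hl.1).2.length_le_card

noncomputable def shortestPathWeight (i : α) : ℝ :=
  sInf ((fun l => pathWeight w (i :: l)) '' simplePathsFrom p i)

variable [Fintype α] {w p}

lemma shortestPathWeight_le {i : α} {l : List α} (hl : l ∈ simplePathsFrom p i) :
    shortestPathWeight w p i ≤ pathWeight w (i :: l) :=
  csInf_le ((finite_simplePathsFrom p i).image _).bddBelow ⟨l, hl, rfl⟩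

lemma exists_pathWeight_eq_shortestPathWeight {i : α} (hi : p i) :
    ∃ l ∈ simplePathsFrom p i, pathWeight w (i :: l) = shortestPathWeight w p i := by
  have hne : ((fun l => pathWeight w (i :: l)) '' simplePathsFrom p i).Nonempty :=
    ⟨_, [], ⟨List.nodup_singleton i, by simpa using hi⟩, rfl⟩
  exact hne.csInf_mem ((finite_simplePathsFrom p i).image _)

lemma shortestPathWeight_le_add
    (hcyc : ∀ a t, (a :: t).Nodup → t ≠ [] → (∀ b ∈ a :: t, p b) →
      0 ≤ pathWeight w (a :: t ++ [a]))
    {i j : α} (hi : p i) (hj : p j) (hij : i ≠ j) :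
    shortestPathWeight w p i ≤ shortestPathWeight w p j + w i j := by
  obtain ⟨T, ⟨hnd, hp⟩, hT⟩ := exists_pathWeight_eq_shortestPathWeight (w := w) hj
  by_cases hiT : i ∈ T
  · obtain ⟨Q, R, rfl⟩ := List.append_of_mem hiT
    have hsub : (j :: Q ++ [i]).Sublist (j :: (Q ++ i :: R)) :=
      (((List.nil_sublist R).cons_cons i).append_left Q).cons_cons j
    have hcycle : 0 ≤ pathWeight w (j :: Q ++ [i]) + w i j := by
      have := hcyc j (Q ++ [i]) (hnd.sublist hsub) (by simp) fun b hb => hp b (hsub.mem hb)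
      rw [show j :: (Q ++ [i]) ++ [j] = j :: Q ++ [i, j] by simp, pathWeight_append_cons] at this
      linarith [show pathWeight w [i, j] = w i j from add_zero _]
    have hpath : R ∈ simplePathsFrom p i :=
      ⟨(List.nodup_cons.mp hnd).2.of_append_right,
        fun b hb => hp b (List.mem_cons_of_mem _ (List.mem_append_right _ hb))⟩
    rw [← List.cons_append, pathWeight_append_cons] at hT
    linarith [shortestPathWeight_le (w := w) hpath]
  · have hpath : j :: T ∈ simplePathsFrom p i :=
      ⟨List.nodup_cons.mpr ⟨by simp [hij, hiT], hnd⟩,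
        List.forall_mem_cons.mpr ⟨hi, hp⟩⟩
    have := shortestPathWeight_le (w := w) hpath
    rw [pathWeight] at this
    linarith

theorem exists_potential_of_forall_cycleSum_nonneg
    (hcyc : ∀ k v, IsCycle k v → (∀ i < k, p (v i)) → 0 ≤ cycleSum w k v) :
    ∃ u : α → ℝ, ∀ i j, p i → p j → i ≠ j → u i ≤ u j + w i j := by
  refine ⟨shortestPathWeight w p, fun i j hi hj hij => shortestPathWeight_le_add ?_ hi hj hij⟩
  intro a t hnd ht hp
  rw [← cycleSum_getD_eq_pathWeight w a t a]
  refine hcyc _ _ (isCycle_getD_s7 hnd ?_ a) fun i hi => ?_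
  · simpa [Nat.one_le_iff_ne_zero] using ht
  · rw [List.getD_eq_getElem _ _ hi]
    exact hp _ (List.getElem_mem hi)

end ShortestPaths

theorem stmt_7_general (n : ℕ) (d : Fin (n + 1) → Fin (n + 1) → ℝ)
    (x : Fin (n + 1) → Fin (n + 1) → ℝ) :
    (memPAP x ∧ ∃ u : Fin (n + 1) → ℝ, ∀ i j : Fin (n + 1), i ≠ 0 → j ≠ 0 → i ≠ j →
        u i - u j + d i j ≤ 1 - x i j)
    ↔ (memPAP x ∧ ∀ (k : ℕ) (v : ℕ → Fin (n + 1)), IsCycle1 k v →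
        cycleSum x k v ≤ (k : ℝ) - cycleSum d k v) := by
  refine and_congr_right fun _ => ⟨?_, fun hC => ?_⟩
  · rintro ⟨u, hu⟩ k v ⟨hv, h0⟩
    have := cycleSum_le_cycleSum (f := fun a b => (u a - u b) + d a b) (g := fun a b => 1 - x a b)
      fun i hi => hu _ _ (h0 i hi) (h0 _ (Nat.mod_lt _ (by omega))) (hv.apply_ne_apply_succ hi)
    rw [cycleSum_add, cycleSum_sub_potential, cycleSum_sub, cycleSum_const] at this
    linarith
  · obtain ⟨u, hu⟩ := exists_potential_of_forall_cycleSum_nonneg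
      (w := fun a b => (1 - x a b) - d a b) (p := (· ≠ 0)) fun k v hv h0 => by
        rw [cycleSum_sub, cycleSum_sub, cycleSum_const]
        linarith [hC k v ⟨hv, h0⟩]
    exact ⟨u, fun i j hi hj hij => by linarith [hu i j hi hj hij]⟩

/-- For `d ∈ D̄`, the projection of `Q_MTZ(d)` onto the `x`-variables equals
`P_MTZ(d) = {x ∈ P_AP : ∑_{ij∈C} x_{ij} ≤ |C| - ∑_{ij∈C} d_{ij} ∀ C ∈ 𝒞₁}`. -/
theorem stmt_7 (n : ℕ) (hn : 4 ≤ n + 1) (d : Fin (n + 1) → Fin (n + 1) → ℝ)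
    (hd : memDbar d) (x : Fin (n + 1) → Fin (n + 1) → ℝ) :
    (memPAP x ∧ ∃ u : Fin (n + 1) → ℝ, ∀ i j : Fin (n + 1), i ≠ 0 → j ≠ 0 → i ≠ j →
        u i - u j + d i j ≤ 1 - x i j)
    ↔ (memPAP x ∧ ∀ (k : ℕ) (v : ℕ → Fin (n + 1)), IsCycle1 k v →
        cycleSum x k v ≤ (k : ℝ) - cycleSum d k v) :=
  stmt_7_general n d x
end

section
/- Fix $d\in\overline{D}$ and a cycle $\hat{C}\in\mathcal{C}_1$ with $\sum_{ij\in\hat{C}}d_{ij}>0$ and $|\hat{C}|\le n-2$. Let $\bar{C}$ be a directed cycle on the nodes of $N$ not covered by $\hat{C}$, and let $\hat{x}=\mathbf{1}_{\hat{C}}+\mathbf{1}_{\bar{C}}$. Then $\hat{x}\in P_{\mathrm{AP}}$, $\hat{x}$ satisfies $\sum_{ij\in C}\hat{x}_{ij}\le|C|-\sum_{ij\in C}d_{ij}$ for every cycle $C\in\mathcal{C}_1$ with $C\ne\hat{C}$, and $\hat{x}$ violates this inequality for $C=\hat{C}$. -/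
private lemma succ_mod_ne {k i : ℕ} (hk : 2 ≤ k) (hi : i < k) : (i + 1) % k ≠ i := by
  rcases Nat.lt_or_ge (i + 1) k with h | h
  · rw [Nat.mod_eq_of_lt h]; omega
  · rw [show i + 1 = k by omega, Nat.mod_self]; omega

private lemma succ_mod_inj {k i j : ℕ} (hi : i < k) (hj : j < k)
    (h : (i + 1) % k = (j + 1) % k) : i = j := by
  rcases Nat.lt_or_ge (i + 1) k with h1 | h1 <;> rcases Nat.lt_or_ge (j + 1) k with h2 | h2
  · rw [Nat.mod_eq_of_lt h1, Nat.mod_eq_of_lt h2] at h; omega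
  · rw [Nat.mod_eq_of_lt h1, show j + 1 = k by omega, Nat.mod_self] at h; omega
  · rw [show i + 1 = k by omega, Nat.mod_self, Nat.mod_eq_of_lt h2] at h; omega
  · omega

private lemma pred_mod {K : ℕ} (hK : 0 < K) {i : ℕ} (hi : i < K) :
    ((i + K - 1) % K + 1) % K = i := by
  rw [Nat.mod_add_mod, show i + K - 1 + 1 = i + K by omega, Nat.add_mod_right,
    Nat.mod_eq_of_lt hi]

private lemma cycle_sub {α : Type} {k : ℕ} {u : ℕ → α} (hk : 2 ≤ k)
    (hinj : ∀ i < k, ∀ j < k, u i = u j → i = j)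
    {k'' : ℕ} {v'' : ℕ → α} (hk'' : 2 ≤ k'')
    (hinj'' : ∀ i < k'', ∀ j < k'', v'' i = v'' j → i = j)
    (harc : ∀ j < k'', ∃ m < k, u m = v'' j ∧ u ((m + 1) % k) = v'' ((j + 1) % k'')) :
    k'' = k ∧ ∀ m < k, ∃ j < k'', v'' j = u m := by
  have hkpos : 0 < k := by omega
  have hk''pos : 0 < k'' := by omega
  obtain ⟨i₀, hi₀, h01, h02⟩ := harc 0 hk''pos
  have htr : ∀ j, j < k'' → v'' j = u ((i₀ + j) % k) := by
    intro j
    induction j with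
    | zero => intro _; rw [Nat.add_zero, Nat.mod_eq_of_lt hi₀]; exact h01.symm
    | succ j ih =>
      intro hj
      have hjlt : j < k'' := by omega
      obtain ⟨m, hm, h1, h2⟩ := harc j hjlt
      have hm' : m = (i₀ + j) % k :=
        hinj m hm _ (Nat.mod_lt _ hkpos) (h1.trans (ih hjlt))
      have h3 : v'' ((j + 1) % k'') = u ((m + 1) % k) := h2.symm
      rw [Nat.mod_eq_of_lt hj] at h3
      rw [h3, hm', Nat.mod_add_mod, Nat.add_assoc]
  have hclose : (i₀ + k'') % k = i₀ := by
    obtain ⟨m, hm, h1, h2⟩ := harc (k'' - 1) (by omega)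
    have hm' : m = (i₀ + (k'' - 1)) % k :=
      hinj m hm _ (Nat.mod_lt _ hkpos) (h1.trans (htr _ (by omega)))
    rw [show (k'' - 1 + 1) % k'' = 0 by rw [show k'' - 1 + 1 = k'' by omega, Nat.mod_self]] at h2
    have h4 : (m + 1) % k = i₀ := hinj _ (Nat.mod_lt _ hkpos) i₀ hi₀ (h2.trans h01.symm)
    rw [hm', Nat.mod_add_mod] at h4
    rw [show i₀ + k'' = i₀ + (k'' - 1) + 1 by omega]
    exact h4
  have hdvd : k ∣ k'' := by
    have h1 : (i₀ + k'') % k = (i₀ + 0) % k := by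
      rw [hclose, Nat.add_zero, Nat.mod_eq_of_lt hi₀]
    exact (Nat.modEq_zero_iff_dvd).mp (Nat.ModEq.add_left_cancel' i₀ h1)
  have hle : k'' ≤ k := by
    classical
    have h1 : ((Finset.range k'').image v'').card = k'' := by
      rw [Finset.card_image_of_injOn, Finset.card_range]
      intro i hi j hj hij
      exact hinj'' i (Finset.mem_range.mp hi) j (Finset.mem_range.mp hj) hij
    have h2 : (Finset.range k'').image v'' ⊆ (Finset.range k).image u := by
      intro a ha
      obtain ⟨i, hi, rfl⟩ := Finset.mem_image.mp ha
      obtain ⟨m, hm, h1', _⟩ := harc i (Finset.mem_range.mp hi)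
      exact Finset.mem_image.mpr ⟨m, Finset.mem_range.mpr hm, h1'⟩
    calc k'' = ((Finset.range k'').image v'').card := h1.symm
      _ ≤ ((Finset.range k).image u).card := Finset.card_le_card h2
      _ ≤ k := le_of_le_of_eq Finset.card_image_le (Finset.card_range k)
  have hkk : k'' = k := le_antisymm hle (Nat.le_of_dvd hk''pos hdvd)
  refine ⟨hkk, fun m hm => ?_⟩
  refine ⟨(m + k - i₀) % k'', Nat.mod_lt _ hk''pos, ?_⟩
  have hj := htr ((m + k - i₀) % k'') (Nat.mod_lt _ hk''pos)
  rw [hkk] at hj ⊢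
  rw [hj, Nat.add_mod_mod, show i₀ + (m + k - i₀) = m + k by omega,
    Nat.add_mod_right, Nat.mod_eq_of_lt hm]

/-- The incidence vector of `Ĉ ∪ C̄`, where `Ĉ ∈ 𝒞₁` has `∑_{ij∈Ĉ} d_{ij} > 0` and
`|Ĉ| ≤ n - 2` and `C̄` is a cycle on the remaining nodes, lies in `P_AP`, satisfies
all cycle inequalities of `P_MTZ(d)` except the one for `Ĉ`, which it violates. -/
theorem stmt_8 (n : ℕ) (hn : 4 ≤ n + 1)
    (d : Fin (n + 1) → Fin (n + 1) → ℝ) (hd : memDbar d)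
    (k : ℕ) (v : ℕ → Fin (n + 1)) (hC : IsCycle1 k v)
    (hdpos : 0 < cycleSum d k v) (hk : k ≤ n - 1)
    (k' : ℕ) (w : ℕ → Fin (n + 1)) (hC' : IsCycle k' w)
    (hcover : ∀ a : Fin (n + 1), (∃ i < k', w i = a) ↔ ¬ ∃ i < k, v i = a)
    (x : Fin (n + 1) → Fin (n + 1) → ℝ)
    (hx : ∀ a b : Fin (n + 1),
      ((inCycle k v a b ∨ inCycle k' w a b) → x a b = 1) ∧
      (¬ (inCycle k v a b ∨ inCycle k' w a b) → x a b = 0)) :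
    memPAP x ∧
    (∀ (k'' : ℕ) (v'' : ℕ → Fin (n + 1)), IsCycle1 k'' v'' →
      ¬ (∀ a b : Fin (n + 1), inCycle k'' v'' a b ↔ inCycle k v a b) →
      cycleSum x k'' v'' ≤ (k'' : ℝ) - cycleSum d k'' v'') ∧
    (k : ℝ) - cycleSum d k v < cycleSum x k v := by
  classical
  have hk2 : 2 ≤ k := hC.1.1
  have hv_inj := hC.1.2
  have hv0 := hC.2
  have hk'2 : 2 ≤ k' := hC'.1
  have hw_inj := hC'.2
  have kpos : 0 < k := by omega
  have k'pos : 0 < k' := by omega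
  have hout : ∀ a : Fin (n + 1), ∃ b : Fin (n + 1), b ≠ a ∧
      (inCycle k v a b ∨ inCycle k' w a b) ∧
      ∀ b', (inCycle k v a b' ∨ inCycle k' w a b') → b' = b := by
    intro a
    by_cases ha : ∃ i < k, v i = a
    · obtain ⟨i, hi, rfl⟩ := ha
      refine ⟨v ((i + 1) % k), ?_, Or.inl ⟨i, hi, rfl, rfl⟩, ?_⟩
      · intro h
        exact succ_mod_ne hk2 hi (hv_inj _ (Nat.mod_lt _ kpos) i hi h)
      · rintro b' (⟨j, hj, hj1, rfl⟩ | ⟨j, hj, hj1, rfl⟩)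
        · rw [hv_inj j hj i hi hj1]
        · exact absurd ⟨i, hi, rfl⟩ ((hcover (v i)).mp ⟨j, hj, hj1⟩)
    · obtain ⟨i, hi, rfl⟩ := (hcover a).mpr ha
      refine ⟨w ((i + 1) % k'), ?_, Or.inr ⟨i, hi, rfl, rfl⟩, ?_⟩
      · intro h
        exact succ_mod_ne hk'2 hi (hw_inj _ (Nat.mod_lt _ k'pos) i hi h)
      · rintro b' (⟨j, hj, hj1, rfl⟩ | ⟨j, hj, hj1, rfl⟩)
        · exact absurd ⟨j, hj, hj1⟩ ((hcover (w i)).mp ⟨i, hi, rfl⟩)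
        · rw [hw_inj j hj i hi hj1]
  have hin : ∀ a : Fin (n + 1), ∃ b : Fin (n + 1), b ≠ a ∧
      (inCycle k v b a ∨ inCycle k' w b a) ∧
      ∀ b', (inCycle k v b' a ∨ inCycle k' w b' a) → b' = b := by
    intro a
    by_cases ha : ∃ i < k, v i = a
    · obtain ⟨i, hi, rfl⟩ := ha
      have hplt : (i + k - 1) % k < k := Nat.mod_lt _ kpos
      refine ⟨v ((i + k - 1) % k), ?_,
        Or.inl ⟨(i + k - 1) % k, hplt, rfl, by rw [pred_mod kpos hi]⟩, ?_⟩
      · intro h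
        have hpi : (i + k - 1) % k = i := hv_inj _ hplt i hi h
        have hpm := pred_mod kpos hi
        rw [hpi] at hpm
        exact succ_mod_ne hk2 hi hpm
      · rintro b' (⟨j, hj, rfl, hj2⟩ | ⟨j, hj, rfl, hj2⟩)
        · have h1 : (j + 1) % k = i := hv_inj _ (Nat.mod_lt _ kpos) i hi hj2
          have h2 : (j + 1) % k = ((i + k - 1) % k + 1) % k := by
            rw [h1, pred_mod kpos hi]
          rw [succ_mod_inj hj hplt h2]
        · exact absurd ⟨i, hi, rfl⟩
            ((hcover (v i)).mp ⟨(j + 1) % k', Nat.mod_lt _ k'pos, hj2⟩)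
    · obtain ⟨i, hi, rfl⟩ := (hcover a).mpr ha
      have hplt : (i + k' - 1) % k' < k' := Nat.mod_lt _ k'pos
      refine ⟨w ((i + k' - 1) % k'), ?_,
        Or.inr ⟨(i + k' - 1) % k', hplt, rfl, by rw [pred_mod k'pos hi]⟩, ?_⟩
      · intro h
        have hpi : (i + k' - 1) % k' = i := hw_inj _ hplt i hi h
        have hpm := pred_mod k'pos hi
        rw [hpi] at hpm
        exact succ_mod_ne hk'2 hi hpm
      · rintro b' (⟨j, hj, rfl, hj2⟩ | ⟨j, hj, rfl, hj2⟩)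
        · exact absurd ⟨(j + 1) % k, Nat.mod_lt _ kpos, hj2⟩
            ((hcover (w i)).mp ⟨i, hi, rfl⟩)
        · have h1 : (j + 1) % k' = i := hw_inj _ (Nat.mod_lt _ k'pos) i hi hj2
          have h2 : (j + 1) % k' = ((i + k' - 1) % k' + 1) % k' := by
            rw [h1, pred_mod k'pos hi]
          rw [succ_mod_inj hj hplt h2]
  have hx01 : ∀ a b : Fin (n + 1), x a b = 0 ∨ x a b = 1 := by
    intro a b
    by_cases h : inCycle k v a b ∨ inCycle k' w a b
    · exact Or.inr ((hx a b).1 h)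
    · exact Or.inl ((hx a b).2 h)
  have hPAP : memPAP x := by
    refine ⟨fun i j _ => ?_, fun a => ?_, fun a => ?_⟩
    · rcases hx01 i j with h | h <;> rw [h] <;> norm_num
    · obtain ⟨b, hba, harc, huniq⟩ := hout a
      rw [Finset.sum_eq_single_of_mem b (Finset.mem_erase.mpr ⟨hba, Finset.mem_univ b⟩)
        (fun j _ hjb => (hx a j).2 (fun h => hjb (huniq j h)))]
      exact (hx a b).1 harc
    · obtain ⟨b, hba, harc, huniq⟩ := hin a
      rw [Finset.sum_eq_single_of_mem b (Finset.mem_erase.mpr ⟨hba, Finset.mem_univ b⟩)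
        (fun j _ hjb => (hx j a).2 (fun h => hjb (huniq j h)))]
      exact (hx b a).1 harc
  have hxkv : cycleSum x k v = (k : ℝ) := by
    unfold cycleSum
    rw [Finset.sum_congr rfl
      (fun i hi => (hx _ _).1 (Or.inl ⟨i, Finset.mem_range.mp hi, rfl, rfl⟩))]
    simp
  refine ⟨hPAP, ?_, by rw [hxkv]; linarith⟩
  intro k'' v'' hC'' hne
  have hk''2 : 2 ≤ k'' := hC''.1.1
  have hv''_inj := hC''.1.2
  have k''pos : 0 < k'' := by omega
  have hdle : cycleSum d k'' v'' ≤ 1 := hd.2 k'' v'' hC''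
  have hzero : ∃ i < k'', x (v'' i) (v'' ((i + 1) % k'')) = 0 := by
    by_contra hcon
    push_neg at hcon
    have hall : ∀ j < k'', inCycle k v (v'' j) (v'' ((j + 1) % k'')) ∨
        inCycle k' w (v'' j) (v'' ((j + 1) % k'')) := by
      intro j hj
      by_contra h
      exact hcon j hj ((hx _ _).2 h)
    by_cases hA : ∃ i < k, v i = v'' 0
    · have harcA : ∀ j, j < k'' → inCycle k v (v'' j) (v'' ((j + 1) % k'')) := by
        intro j
        induction j with
        | zero =>
          intro hj
          rcases hall 0 hj with h | h
          · exact h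
          · obtain ⟨m', hm', h1, _⟩ := h
            exact absurd hA ((hcover (v'' 0)).mp ⟨m', hm', h1⟩)
        | succ j ih =>
          intro hj
          have hjlt : j < k'' := by omega
          obtain ⟨m, hm, _, hm2⟩ := ih hjlt
          have hmem : ∃ i < k, v i = v'' (j + 1) := by
            refine ⟨(m + 1) % k, Nat.mod_lt _ kpos, ?_⟩
            rw [hm2, Nat.mod_eq_of_lt hj]
          rcases hall (j + 1) hj with h | h
          · exact h
          · obtain ⟨m', hm', h1, _⟩ := h
            exact absurd hmem ((hcover (v'' (j + 1))).mp ⟨m', hm', h1⟩)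
      obtain ⟨hkk, hsurj⟩ := cycle_sub hk2 hv_inj hk''2 hv''_inj harcA
      apply hne
      intro a b
      constructor
      · rintro ⟨j, hj, rfl, rfl⟩
        exact harcA j hj
      · rintro ⟨m, hm, rfl, rfl⟩
        obtain ⟨j, hj, hvj⟩ := hsurj m hm
        obtain ⟨m', hm', h1, h2⟩ := harcA j hj
        have hmm : m' = m := hv_inj m' hm' m hm (h1.trans hvj)
        rw [hmm] at h2
        exact ⟨j, hj, hvj, h2.symm⟩
    · have hA' : ∃ i < k', w i = v'' 0 := (hcover (v'' 0)).mpr hA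
      have harcB : ∀ j, j < k'' → inCycle k' w (v'' j) (v'' ((j + 1) % k'')) := by
        intro j
        induction j with
        | zero =>
          intro hj
          rcases hall 0 hj with h | h
          · obtain ⟨m', hm', h1, _⟩ := h
            exact absurd ⟨m', hm', h1⟩ ((hcover (v'' 0)).mp hA')
          · exact h
        | succ j ih =>
          intro hj
          have hjlt : j < k'' := by omega
          obtain ⟨m, hm, _, hm2⟩ := ih hjlt
          have hmem : ∃ i < k', w i = v'' (j + 1) := by
            refine ⟨(m + 1) % k', Nat.mod_lt _ k'pos, ?_⟩
            rw [hm2, Nat.mod_eq_of_lt hj]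
          rcases hall (j + 1) hj with h | h
          · obtain ⟨m', hm', h1, _⟩ := h
            exact absurd ⟨m', hm', h1⟩ ((hcover (v'' (j + 1))).mp hmem)
          · exact h
      obtain ⟨hkk, hsurj⟩ := cycle_sub hk'2 hw_inj hk''2 hv''_inj harcB
      obtain ⟨m, hm, hw0⟩ : ∃ i < k', w i = 0 :=
        (hcover 0).mpr (fun ⟨m, hm, hvm⟩ => hv0 m hm hvm)
      obtain ⟨j, hj, hvj⟩ := hsurj m hm
      exact hC''.2 j hj (hvj.trans hw0)
  obtain ⟨i₀, hi₀, hx0⟩ := hzero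
  have hterm : ∀ i ∈ Finset.range k'', x (v'' i) (v'' ((i + 1) % k'')) ≤ 1 := by
    intro i _
    rcases hx01 (v'' i) (v'' ((i + 1) % k'')) with h | h <;> rw [h] <;> norm_num
  have hsum : cycleSum x k'' v'' ≤ (k'' : ℝ) - 1 := by
    unfold cycleSum
    rw [← Finset.add_sum_erase _ _ (Finset.mem_range.mpr hi₀), hx0, zero_add]
    have hb := Finset.sum_le_card_nsmul ((Finset.range k'').erase i₀)
      (fun i => x (v'' i) (v'' ((i + 1) % k''))) 1
      (fun i hi => hterm i (Finset.mem_of_mem_erase hi))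
    rw [Finset.card_erase_of_mem (Finset.mem_range.mpr hi₀), Finset.card_range] at hb
    refine hb.trans ?_
    rw [nsmul_eq_mul, mul_one, Nat.cast_sub (by omega), Nat.cast_one]
  linarith
end

section
/- For every $d$ in the interior of $\overline{D}$ (i.e., $d>0$ and $\sum_{ij\in C}d_{ij}<1$ for all $C\in\mathcal{C}_1$), there exists $d'$ in the interior of $\overline{D}$ such that $P_{\mathrm{MTZ}}(d')\subsetneq P_{\mathrm{MTZ}}(d)$. -/
/-- Membership in `P_MTZ(d)`: the projection of the `d`-MTZ relaxation. -/
def memPMTZ {n : ℕ} (d x : Fin (n + 1) → Fin (n + 1) → ℝ) : Prop :=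
  memPAP x ∧ ∀ (k : ℕ) (v : ℕ → Fin (n + 1)), IsCycle1 k v →
    cycleSum x k v ≤ (k : ℝ) - cycleSum d k v

/-!
Take `d' = d + ε` with `ε > 0` so small that every cycle sum stays below `1`; this is possible
because there are only finitely many cycle sums, and `P_MTZ(d') ⊆ P_MTZ(d)` is then clear.
For strictness put `δ = d₁₂ + d₂₁` and `x = (1 - δ) K + δ T`, where `T` is the tour
`0 → 1 → ⋯ → n → 0` and `K` has the cycles `(1 2)` and `(0 3 ⋯ n)`.
On a cycle `C` avoiding `0`, `T` uses at most `|C| - 1` arcs, and so does `K` unless `C = (1 2)`;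
hence
`x(C) ≤ |C| - 1 < |C| - d(C)`, while on `(1 2)` the inequality `x(C) ≤ 2 - d(C)` is tight.
Since `d'` adds `2ε` to `d(1 2)`, the point `x` leaves `P_MTZ(d')`.
-/
open Finset

section CycleSum

variable {α : Type} {k : ℕ} {v w : ℕ → α}

lemma cycleSum_congr (c : α → α → ℝ) (h : ∀ i < k, v i = w i) :
    cycleSum c k v = cycleSum c k w := by
  refine sum_congr rfl fun i hi => ?_
  have hi : i < k := mem_range.mp hi
  rw [h i hi, h _ (Nat.mod_lt _ (by omega))]

lemma cycleSum_add_const (c : α → α → ℝ) (ε : ℝ) :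
    cycleSum (fun i j => c i j + ε) k v = cycleSum c k v + k * ε := by
  simp [cycleSum, sum_add_distrib]

lemma cycleSum_smul_add_smul (a b : ℝ) (x y : α → α → ℝ) :
    cycleSum (a • x + b • y) k v = a * cycleSum x k v + b * cycleSum y k v := by
  simp [cycleSum, sum_add_distrib, mul_sum]

lemma cycleSum_two (c : α → α → ℝ) (v : ℕ → α) :
    cycleSum c 2 v = c (v 0) (v 1) + c (v 1) (v 0) := by
  simp [cycleSum, sum_range_succ]

end CycleSum

lemma IsCycle1.length_le {n k : ℕ} {v : ℕ → Fin (n + 1)} (h : IsCycle1 k v) : k ≤ n := by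
  obtain ⟨⟨-, hinj⟩, h0⟩ := h
  have := card_le_card_of_injOn v (s := range k) (t := univ.erase 0)
    (fun i hi => mem_erase.mpr ⟨h0 i (mem_range.mp hi), mem_univ _⟩)
    (fun i hi j hj => hinj i (mem_range.mp hi) j (mem_range.mp hj))
  simpa using this

lemma finite_cycleSum_cycle1 {n : ℕ} (d : Fin (n + 1) → Fin (n + 1) → ℝ) :
    {s | ∃ k v, IsCycle1 k v ∧ cycleSum d k v = s}.Finite := by
  refine (Set.finite_range fun p : Fin (n + 1) × (Fin (n + 1) → Fin (n + 1)) =>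
    cycleSum d p.1 fun i => p.2 (Fin.ofNat (n + 1) i)).subset ?_
  rintro _ ⟨k, v, hc, rfl⟩
  have hk : k < n + 1 := Nat.lt_succ_of_le hc.length_le
  refine ⟨(⟨k, hk⟩, fun j => v j), cycleSum_congr d fun i hi => ?_⟩
  simp [Nat.mod_eq_of_lt (hi.trans hk)]

lemma exists_pos_cycleSum_add_lt_one {n : ℕ} (d : Fin (n + 1) → Fin (n + 1) → ℝ)
    (hd : ∀ k v, IsCycle1 k v → cycleSum d k v < 1) :
    ∃ ε > 0, ∀ k v, IsCycle1 k v → cycleSum d k v + n * ε < 1 := by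
  have hev : ∀ᶠ ε in nhdsWithin (0 : ℝ) (Set.Ioi 0),
      ∀ s ∈ {s | ∃ k v, IsCycle1 k v ∧ cycleSum d k v = s}, s + n * ε < 1 := by
    refine (Filter.eventually_all_finite (finite_cycleSum_cycle1 d)).2 ?_
    rintro _ ⟨k, v, hc, rfl⟩
    have hlim : Filter.Tendsto (fun ε : ℝ => cycleSum d k v + n * ε)
        (nhdsWithin 0 (Set.Ioi 0)) (nhds (cycleSum d k v)) := by
      have : Continuous fun ε : ℝ => cycleSum d k v + n * ε := by fun_prop
      simpa using (this.tendsto 0).mono_left nhdsWithin_le_nhds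
    exact hlim.eventually (gt_mem_nhds (hd k v hc))
  obtain ⟨ε, hε, hlt⟩ := (hev.and self_mem_nhdsWithin).exists
  exact ⟨ε, hlt, fun k v hc => hε _ ⟨k, v, hc, rfl⟩⟩

section PermArcs

variable {α : Type} {k : ℕ} {v : ℕ → α}

def IsCycleOf (σ : α → α) (k : ℕ) (v : ℕ → α) : Prop :=
  ∀ i < k, σ (v i) = v ((i + 1) % k)

lemma IsCycleOf.apply_mod {σ : α → α} (h : IsCycleOf σ k v) (hk : 0 < k) (j : ℕ) :
    v (j % k) = σ^[j] (v 0) := by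
  induction j with
  | zero => simp
  | succ j ih =>
    rw [Function.iterate_succ_apply', ← ih, h _ (Nat.mod_lt _ hk), Nat.mod_add_mod]

variable [DecidableEq α]

def permArcs (σ : Equiv.Perm α) (i j : α) : ℝ := if σ i = j then 1 else 0

lemma permArcs_le_one (σ : Equiv.Perm α) (i j : α) : permArcs σ i j ≤ 1 := by
  unfold permArcs; split_ifs <;> norm_num

lemma cycleSum_permArcs_le (σ : Equiv.Perm α) : cycleSum (permArcs σ) k v ≤ k := by
  simpa [cycleSum] using sum_le_card_nsmul (range k) _ 1 fun i _ => permArcs_le_one σ _ _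

lemma cycleSum_permArcs_le_sub_one {σ : Equiv.Perm α} (h : ¬ IsCycleOf σ k v) :
    cycleSum (permArcs σ) k v ≤ k - 1 := by
  obtain ⟨i₀, hi₀, hne⟩ : ∃ i < k, σ (v i) ≠ v ((i + 1) % k) := by
    simpa [IsCycleOf] using h
  have hmem : i₀ ∈ range k := mem_range.mpr hi₀
  have hrest := sum_le_card_nsmul ((range k).erase i₀)
    (fun i => permArcs σ (v i) (v ((i + 1) % k))) 1 fun i _ => permArcs_le_one σ _ _
  rw [cycleSum, ← add_sum_erase _ _ hmem]
  simp only [card_erase_of_mem hmem, card_range, nsmul_eq_mul, mul_one] at hrest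
  simp only [permArcs, hne, if_false, zero_add]
  rwa [Nat.cast_sub (by omega), Nat.cast_one] at hrest

end PermArcs

open Fin.NatCast in
lemma not_isCycleOf_add_one {n k : ℕ} {v : ℕ → Fin (n + 1)} (hk : 0 < k) (hkn : k ≤ n) :
    ¬ IsCycleOf (· + 1) k v := by
  intro h
  have hv := h.apply_mod hk k
  rw [Nat.mod_self, add_right_iterate_apply, left_eq_add, nsmul_one,
    Fin.natCast_eq_zero] at hv
  have := Nat.le_of_dvd hk hv
  omega

lemma memPAP_permArcs {n : ℕ} {σ : Equiv.Perm (Fin (n + 1))} (hσ : ∀ i, σ i ≠ i) :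
    memPAP (permArcs σ) := by
  refine ⟨fun i j _ => ⟨?_, permArcs_le_one σ i j⟩, fun i => ?_, fun i => ?_⟩
  · unfold permArcs; split_ifs <;> norm_num
  · simp [permArcs, hσ i]
  · have hσ' : σ.symm i ≠ i := fun h => hσ i (σ.symm_apply_eq.mp h).symm
    simp [permArcs, ← Equiv.eq_symm_apply, hσ']

lemma convex_memPAP (n : ℕ) :
    Convex ℝ {x : Fin (n + 1) → Fin (n + 1) → ℝ | memPAP x} := by
  rintro x ⟨hx, hxr, hxc⟩ y ⟨hy, hyr, hyc⟩ a b ha hb hab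
  refine ⟨fun i j hij => ?_, fun i => ?_, fun i => ?_⟩
  · obtain ⟨hx0, hx1⟩ := hx i j hij
    obtain ⟨hy0, hy1⟩ := hy i j hij
    simp only [Pi.add_apply, Pi.smul_apply, smul_eq_mul]
    constructor <;> nlinarith
  · simp [sum_add_distrib, ← mul_sum, hxr i, hyr i, hab]
  · simp [sum_add_distrib, ← mul_sum, hxc i, hyc i, hab]

lemma Fin.add_one_ne_self {n : ℕ} (hn : 1 ≤ n) (i : Fin (n + 1)) : i + 1 ≠ i := by
  rw [ne_eq, add_eq_left, Fin.one_eq_zero_iff]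
  omega

/-- The permutation with cycles `(1 2)` and `(0 3 4 … n)`. -/
def swapTour (n : ℕ) : Equiv.Perm (Fin (n + 1)) :=
  (Equiv.swap 0 2).trans (Equiv.addRight 1)

section SwapTour

variable {n : ℕ}

lemma swapTour_apply_of_ne {i : Fin (n + 1)} (h0 : i ≠ 0) (h2 : i ≠ 2) :
    swapTour n i = i + 1 := by
  simp [swapTour, Equiv.swap_apply_of_ne_of_ne h0 h2]

lemma swapTour_two : swapTour n 2 = 1 := by
  simp [swapTour]

lemma swapTour_one (hn : 2 ≤ n) : swapTour n 1 = 2 := by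
  rw [swapTour_apply_of_ne] <;> simp [Fin.ext_iff, Fin.val_add,
    Nat.mod_eq_of_lt (show 1 < n + 1 by omega), Nat.mod_eq_of_lt (show 2 < n + 1 by omega)]

lemma swapTour_ne_self (hn : 3 ≤ n) (i : Fin (n + 1)) : swapTour n i ≠ i := by
  by_cases h0 : i = 0
  · subst h0
    simp [swapTour, Fin.ext_iff, Fin.val_add, Nat.mod_eq_of_lt (show 2 < n + 1 by omega),
      Nat.mod_eq_of_lt (show 3 < n + 1 by omega)]
  by_cases h2 : i = 2
  · subst h2
    simp [swapTour_two, Fin.ext_iff, Nat.mod_eq_of_lt (show 1 < n + 1 by omega),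
      Nat.mod_eq_of_lt (show 2 < n + 1 by omega)]
  rw [swapTour_apply_of_ne h0 h2]
  exact Fin.add_one_ne_self (by omega) i

/-- The only cycle of `swapTour n` avoiding `0` is `(1 2)`: a cycle through `2` closes after two
steps, and a cycle avoiding `0` and `2` would be a cycle of `· + 1`. -/
lemma IsCycle1.cycleSum_eq_of_isCycleOf_swapTour {k : ℕ} {v : ℕ → Fin (n + 1)}
    (hc : IsCycle1 k v) (h : IsCycleOf (swapTour n) k v) (c : Fin (n + 1) → Fin (n + 1) → ℝ) :
    cycleSum c k v = c 1 2 + c 2 1 := by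
  obtain ⟨⟨hk, hinj⟩, h0⟩ := hc
  have hkn : k ≤ n := IsCycle1.length_le ⟨⟨hk, hinj⟩, h0⟩
  by_cases h2 : ∃ p < k, v p = 2
  · obtain ⟨p, hp, hvp⟩ := h2
    have hvp1 : v ((p + 1) % k) = 1 := by rw [← h p hp, hvp, swapTour_two]
    have hvp2 : v ((p + 2) % k) = 2 := by
      rw [show (p + 2) % k = ((p + 1) % k + 1) % k by rw [Nat.mod_add_mod],
        ← h _ (Nat.mod_lt _ (by omega)), hvp1, swapTour_one (by omega)]
    have hp2 : (p + 2) % k = p % k := by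
      rw [Nat.mod_eq_of_lt hp]
      exact hinj _ (Nat.mod_lt _ (by omega)) p hp (hvp2.trans hvp.symm)
    have hk2 : k = 2 := by
      have := Nat.le_of_dvd two_pos (Nat.dvd_of_mod_eq_zero (by
        simpa using Nat.sub_mod_eq_zero_of_mod_eq hp2))
      omega
    subst hk2
    rw [cycleSum_two]
    interval_cases p
    · simp_all [add_comm]
    · simp_all
  · push Not at h2
    refine absurd (fun i hi => ?_) (not_isCycleOf_add_one (v := v) (by omega) hkn)
    rw [← h i hi, swapTour_apply_of_ne (h0 i hi) (h2 i hi)]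

end SwapTour

section Witness

variable {n : ℕ}

lemma one_ne_zero_two_ne_zero_one_ne_two (hn : 2 ≤ n) :
    (1 : Fin (n + 1)) ≠ 0 ∧ (2 : Fin (n + 1)) ≠ 0 ∧ (1 : Fin (n + 1)) ≠ 2 := by
  refine ⟨?_, ?_, ?_⟩ <;> simp [Fin.ext_iff, Nat.mod_eq_of_lt (show 1 < n + 1 by omega),
    Nat.mod_eq_of_lt (show 2 < n + 1 by omega)]

lemma isCycle1_one_two (hn : 2 ≤ n) :
    IsCycle1 2 (fun i => if i = 0 then (1 : Fin (n + 1)) else 2) := by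
  obtain ⟨h1, h2, h12⟩ := one_ne_zero_two_ne_zero_one_ne_two hn
  refine ⟨⟨le_rfl, fun i hi j hj hij => ?_⟩, fun i hi => ?_⟩
  · interval_cases i <;> interval_cases j <;> simp_all [eq_comm]
  · interval_cases i <;> simp [h1, h2]

def swapTourMix (n : ℕ) (t : ℝ) : Fin (n + 1) → Fin (n + 1) → ℝ :=
  (1 - t) • permArcs (swapTour n) + t • permArcs (Equiv.addRight 1)

lemma memPMTZ_swapTourMix (hn : 3 ≤ n) {t : ℝ} (ht0 : 0 ≤ t) (ht1 : t ≤ 1)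
    {d : Fin (n + 1) → Fin (n + 1) → ℝ} (hd : ∀ k v, IsCycle1 k v → cycleSum d k v < 1)
    (hdt : d 1 2 + d 2 1 ≤ t) : memPMTZ d (swapTourMix n t) := by
  refine ⟨convex_memPAP n (memPAP_permArcs (swapTour_ne_self hn))
    (memPAP_permArcs (Fin.add_one_ne_self (by omega))) (by linarith) ht0 (by ring),
    fun k v hc => ?_⟩
  have hT : cycleSum (permArcs (Equiv.addRight 1)) k v ≤ k - 1 :=
    cycleSum_permArcs_le_sub_one (not_isCycleOf_add_one (by have := hc.1.1; omega) hc.length_le)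
  rw [swapTourMix, cycleSum_smul_add_smul]
  by_cases hK : IsCycleOf (swapTour n) k v
  · have := cycleSum_permArcs_le (swapTour n) (k := k) (v := v)
    rw [hc.cycleSum_eq_of_isCycleOf_swapTour hK d]
    nlinarith
  · have := cycleSum_permArcs_le_sub_one hK
    have := hd k v hc
    nlinarith

lemma swapTourMix_one_two_add (hn : 2 ≤ n) (t : ℝ) :
    swapTourMix n t 1 2 + swapTourMix n t 2 1 = 2 - t := by
  have h11 : (1 : Fin (n + 1)) + 1 = 2 := by
    simp [Fin.ext_iff, Fin.val_add, Nat.mod_eq_of_lt (show 1 < n + 1 by omega),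
      Nat.mod_eq_of_lt (show 2 < n + 1 by omega)]
  have h21 : (2 : Fin (n + 1)) + 1 ≠ 1 := by
    simp [Fin.ext_iff, Nat.mod_eq_of_lt (show 2 < n + 1 by omega)]
  simp only [swapTourMix, Pi.add_apply, Pi.smul_apply, smul_eq_mul, permArcs, Equiv.coe_addRight,
    swapTour_one hn, swapTour_two, h11, h21, if_true, if_false, mul_one, mul_zero]
  ring

end Witness

/-- For every `d` in the interior of `D̄`, there is `d'` in the interior of `D̄`
with `P_MTZ(d') ⊊ P_MTZ(d)`. -/
theorem stmt_9 (n : ℕ) (hn : 4 ≤ n + 1) (d : Fin (n + 1) → Fin (n + 1) → ℝ)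
    (hd1 : ∀ i j : Fin (n + 1), i ≠ 0 → j ≠ 0 → i ≠ j → 0 < d i j)
    (hd2 : ∀ (k : ℕ) (v : ℕ → Fin (n + 1)), IsCycle1 k v → cycleSum d k v < 1) :
    ∃ d' : Fin (n + 1) → Fin (n + 1) → ℝ,
      (∀ i j : Fin (n + 1), i ≠ 0 → j ≠ 0 → i ≠ j → 0 < d' i j) ∧
      (∀ (k : ℕ) (v : ℕ → Fin (n + 1)), IsCycle1 k v → cycleSum d' k v < 1) ∧
      (∀ x : Fin (n + 1) → Fin (n + 1) → ℝ, memPMTZ d' x → memPMTZ d x) ∧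
      ∃ x : Fin (n + 1) → Fin (n + 1) → ℝ, memPMTZ d x ∧ ¬ memPMTZ d' x := by
  obtain ⟨ε, hε, hgap⟩ := exists_pos_cycleSum_add_lt_one d hd2
  obtain ⟨h1, h2, h12⟩ := one_ne_zero_two_ne_zero_one_ne_two (n := n) (by omega)
  have hc12 := isCycle1_one_two (n := n) (by omega)
  have hδ1 : d 1 2 + d 2 1 < 1 := by simpa [cycleSum_two] using hd2 _ _ hc12
  have hδ0 : 0 < d 1 2 + d 2 1 := add_pos (hd1 1 2 h1 h2 h12) (hd1 2 1 h2 h1 h12.symm)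
  refine ⟨fun i j => d i j + ε, fun i j hi hj hij => add_pos (hd1 i j hi hj hij) hε,
    fun k v hc => ?_, fun x hx => ⟨hx.1, fun k v hc => ?_⟩, swapTourMix n (d 1 2 + d 2 1),
    memPMTZ_swapTourMix (by omega) hδ0.le hδ1.le hd2 le_rfl, fun hx => ?_⟩
  · have hkn : (k : ℝ) ≤ n := by exact_mod_cast hc.length_le
    rw [cycleSum_add_const]
    nlinarith [hgap k v hc]
  · have := hx.2 k v hc
    rw [cycleSum_add_const] at this
    nlinarith [k.cast_nonneg (α := ℝ)]
  · have := hx.2 2 _ hc12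
    simp only [cycleSum_two, if_pos, one_ne_zero, if_false, Nat.cast_ofNat] at this
    linarith [swapTourMix_one_two_add (n := n) (by omega) (d 1 2 + d 2 1)]
end

section
/- Let $\delta\in\mathbb{R}^{A_1}$ be anti-symmetric ($\delta_{ij}=-\delta_{ji}$ for all $ij\in A_1$) and satisfy: (i) $\sum_{ij\in C}\delta_{ij}\ge 0$ for every cycle $C\in\mathcal{C}_1$ with $|C|\le n-2$, and (ii) $\sum_{ij\in C}\delta_{ij}\le 0$ for every cycle $C\in\mathcal{C}_1$ with $|C|=n-1$. Then $\sum_{ij\in C}\delta_{ij}=0$ for every cycle $C\in\mathcal{C}_1$. -/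
/-- The reversed cycle is a member of `𝒞₁` as well. -/
lemma rev_isCycle1 {n : ℕ} (k : ℕ) (v : ℕ → Fin (n + 1)) (h : IsCycle1 k v) :
    IsCycle1 k (fun i => v (k - 1 - i)) := by
  obtain ⟨⟨hk2, hinj⟩, h0⟩ := h
  refine ⟨⟨hk2, ?_⟩, ?_⟩
  · intro i hi j hj hij
    have := hinj (k - 1 - i) (by omega) (k - 1 - j) (by omega) hij
    omega
  · intro i hi
    exact h0 (k - 1 - i) (by omega)

/-- Reversing a cycle negates its weight (for antisymmetric `c`). -/
lemma rev_cycleSum {α : Type} (c : α → α → ℝ)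
    (hanti : ∀ i j : α, c i j = -c j i) (k : ℕ) (hk : 1 ≤ k) (v : ℕ → α) :
    cycleSum c k (fun i => v (k - 1 - i)) = - cycleSum c k v := by
  unfold cycleSum
  rw [← Finset.sum_neg_distrib]
  refine Finset.sum_bij' (fun i _ => if i = k - 1 then k - 1 else k - 2 - i)
    (fun i _ => if i = k - 1 then k - 1 else k - 2 - i) ?_ ?_ ?_ ?_ ?_
  · intro i hi
    simp only [Finset.mem_range] at *
    split <;> omega
  · intro i hi
    simp only [Finset.mem_range] at *
    split <;> omega
  · intro i hi
    simp only [Finset.mem_range] at hi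
    rcases eq_or_ne i (k - 1) with h | h
    · simp [h]
    · simp only [if_neg h]
      have : k - 2 - i ≠ k - 1 := by omega
      simp only [if_neg this]
      omega
  · intro i hi
    simp only [Finset.mem_range] at hi
    rcases eq_or_ne i (k - 1) with h | h
    · simp [h]
    · simp only [if_neg h]
      have : k - 2 - i ≠ k - 1 := by omega
      simp only [if_neg this]
      omega
  · intro i hi
    simp only [Finset.mem_range] at hi
    rcases eq_or_ne i (k - 1) with h | h
    · subst h
      have e0 : k - 1 + 1 = k := by omega
      beta_reduce
      rw [if_pos rfl, e0, Nat.mod_self, Nat.sub_self, Nat.sub_zero, hanti]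
    · beta_reduce
      simp only [if_neg h]
      have hi' : i < k - 1 := by omega
      have e1 : (i + 1) % k = i + 1 := Nat.mod_eq_of_lt (by omega)
      have e2 : (k - 2 - i + 1) % k = k - 1 - i := by
        have : k - 2 - i + 1 = k - 1 - i := by omega
        rw [this]; exact Nat.mod_eq_of_lt (by omega)
      rw [e1, e2]
      have e3 : k - 1 - i = k - 1 - i := rfl
      have e4 : k - 1 - (i + 1) = k - 2 - i := by omega
      rw [e4, hanti]

/-- A cycle in `𝒞₁` has length at most `n`. -/
lemma cycle1_len_le {n : ℕ} (k : ℕ) (v : ℕ → Fin (n + 1)) (h : IsCycle1 k v) :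
    k ≤ n := by
  obtain ⟨⟨hk2, hinj⟩, h0⟩ := h
  have : Function.Injective (fun i : Fin k =>
      (⟨v i, h0 i i.isLt⟩ : {x : Fin (n + 1) // x ≠ 0})) := by
    intro i j hij
    have := hinj i i.isLt j j.isLt (by simpa using congrArg Subtype.val hij)
    exact Fin.ext this
  have hle := Fintype.card_le_of_injective _ this
  have hcard : Fintype.card {x : Fin (n + 1) // x ≠ 0} = n := by
    simp [Fintype.card_subtype_compl, Fintype.card_subtype_eq]
  simpa [hcard] using hle

/-- An anti-symmetric `δ` whose sums are nonnegative over cycles of length at most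
`n - 2` (here: at most `n - 1` since `|N| = n + 1`) and nonpositive over cycles of
length `n - 1` (here: `n`) has zero sum over every cycle of `𝒞₁`. -/
theorem stmt_10 (n : ℕ) (hn : 4 ≤ n + 1) (δ : Fin (n + 1) → Fin (n + 1) → ℝ)
    (hanti : ∀ i j : Fin (n + 1), δ i j = -δ j i)
    (h1 : ∀ (k : ℕ) (v : ℕ → Fin (n + 1)), IsCycle1 k v → k ≤ n - 1 →
      0 ≤ cycleSum δ k v)
    (h2 : ∀ (k : ℕ) (v : ℕ → Fin (n + 1)), IsCycle1 k v → k = n →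
      cycleSum δ k v ≤ 0) :
    ∀ (k : ℕ) (v : ℕ → Fin (n + 1)), IsCycle1 k v → cycleSum δ k v = 0 := by
  intro k v hcv
  have hk1 : 1 ≤ k := le_trans (by norm_num) hcv.1.1
  have hkn : k ≤ n := cycle1_len_le k v hcv
  have hrevc := rev_isCycle1 k v hcv
  have hrevs := rev_cycleSum δ hanti k hk1 v
  rcases eq_or_lt_of_le hkn with h | h
  · have ha := h2 k v hcv h
    have hb := h2 k _ hrevc h
    rw [hrevs] at hb
    linarith
  · have hkn' : k ≤ n - 1 := by omega
    have ha := h1 k v hcv hkn'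
    have hb := h1 k _ hrevc hkn'
    rw [hrevs] at hb
    linarith
end

section
/- The convex hull of the set $Z^{ij}_{\mathrm{MTZ}}(d)$ of vectors $(u_i,u_j,x_{ij},x_{ji})\in\mathbb{R}^2\times\{0,1\}^2$ satisfying $x_{ij}+x_{ji}\le 1$ and the implications: if $(x_{ij},x_{ji})=(1,0)$ then $u_i+d_{ij}\le u_j$ and $u_j-u_i\le 1-d_{ji}$; if $(x_{ij},x_{ji})=(0,1)$ then $u_j+d_{ji}\le u_i$ and $u_i-u_j\le 1-d_{ij}$; if $(x_{ij},x_{ji})=(0,0)$ then $u_i-u_j\le 1-d_{ij}$ and $u_j-u_i\le 1-d_{ji}$; is exactly $\{(u_i,u_j,x_{ij},x_{ji}) : u_i-u_j+x_{ij}\le 1-d_{ij},\ u_j-u_i+x_{ji}\le 1-d_{ji},\ x_{ij}+x_{ji}\le 1,\ x_{ij}\ge 0,\ x_{ji}\ge 0\}$. -/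
set_option maxHeartbeats 1600000 in
/-- Convex hull of the MTZ two-arc mixed-integer set `Z^{ij}_MTZ(d)`.
A point `p = (uᵢ, uⱼ, xᵢⱼ, xⱼᵢ)` is encoded as an element of `ℝ × ℝ × ℝ × ℝ`. -/
theorem stmt_12 (dij dji : ℝ) (h1 : 0 < dij) (h2 : 0 < dji) (h3 : dij + dji ≤ 1) :
    convexHull ℝ {p : ℝ × ℝ × ℝ × ℝ |
        (p.2.2.1 = 0 ∨ p.2.2.1 = 1) ∧ (p.2.2.2 = 0 ∨ p.2.2.2 = 1) ∧
        p.2.2.1 + p.2.2.2 ≤ 1 ∧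
        (p.2.2.1 = 1 ∧ p.2.2.2 = 0 → p.1 + dij ≤ p.2.1 ∧ p.2.1 - p.1 ≤ 1 - dji) ∧
        (p.2.2.1 = 0 ∧ p.2.2.2 = 1 → p.2.1 + dji ≤ p.1 ∧ p.1 - p.2.1 ≤ 1 - dij) ∧
        (p.2.2.1 = 0 ∧ p.2.2.2 = 0 → p.1 - p.2.1 ≤ 1 - dij ∧ p.2.1 - p.1 ≤ 1 - dji)}
      = {p : ℝ × ℝ × ℝ × ℝ |
          p.1 - p.2.1 + p.2.2.1 ≤ 1 - dij ∧
          p.2.1 - p.1 + p.2.2.2 ≤ 1 - dji ∧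
          p.2.2.1 + p.2.2.2 ≤ 1 ∧ 0 ≤ p.2.2.1 ∧ 0 ≤ p.2.2.2} := by
  apply Set.Subset.antisymm
  · apply convexHull_min
    · rintro ⟨u, v, x, y⟩ ⟨hx, hy, hs, hA, hB, hC⟩
      simp only [Set.mem_setOf_eq] at *
      rcases hx with hx | hx <;> rcases hy with hy | hy <;> subst hx <;> subst hy
      · obtain ⟨c1, c2⟩ := hC ⟨rfl, rfl⟩
        refine ⟨by linarith, by linarith, by norm_num, le_refl _, le_refl _⟩
      · obtain ⟨c1, c2⟩ := hB ⟨rfl, rfl⟩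
        refine ⟨by linarith, by linarith, by norm_num, by norm_num, by norm_num⟩
      · obtain ⟨c1, c2⟩ := hA ⟨rfl, rfl⟩
        refine ⟨by linarith, by linarith, by norm_num, by norm_num, by norm_num⟩
      · norm_num at hs
    · rintro p hp q hq a b ha hb hab
      obtain ⟨hp1, hp2, hp3, hp4, hp5⟩ := hp
      obtain ⟨hq1, hq2, hq3, hq4, hq5⟩ := hq
      simp only [Set.mem_setOf_eq, Prod.fst_add, Prod.snd_add, Prod.smul_fst, Prod.smul_snd,
        smul_eq_mul]
      refine ⟨by nlinarith, by nlinarith, by nlinarith, by nlinarith, by nlinarith⟩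
  · rintro ⟨u, v, x, y⟩ ⟨hA, hB, hs, hx, hy⟩
    simp only [Set.mem_setOf_eq] at *
    set L : ℝ := y - (1 - dji) with hL
    set U : ℝ := (1 - dij) - x with hU
    have hLw : L ≤ u - v := by simp [hL]; linarith
    have hwU : u - v ≤ U := by simp [hU]; linarith
    obtain ⟨t, ht0, ht1, hwt⟩ :
        ∃ t : ℝ, 0 ≤ t ∧ t ≤ 1 ∧ (1 - t) * L + t * U = u - v := by
      by_cases h : U ≤ L
      · have he : u - v = L := le_antisymm (le_trans hwU h) hLw
        exact ⟨0, le_refl 0, by norm_num, by rw [he]; ring⟩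
      · have hUL : 0 < U - L := by linarith [not_le.mp h]
        refine ⟨(u - v - L) / (U - L), div_nonneg (by linarith) (by linarith), ?_, ?_⟩
        · rw [div_le_one hUL]; linarith
        · field_simp
          ring
    have hp1 : 0 ≤ (1 - t) * (1 - dij - dji) := mul_nonneg (by linarith) (by linarith)
    have hp2 : 0 ≤ t * (1 - dij - dji) := mul_nonneg ht0 (by linarith)
    set a1 : ℝ := (1 - t) * (-(1 - dji)) + t * (-dij) with ha1
    set a2 : ℝ := (1 - t) * dji + t * (1 - dij) with ha2
    set a0 : ℝ := (1 - t) * (-(1 - dji)) + t * (1 - dij) with ha0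
    set Z : Set (ℝ × ℝ × ℝ × ℝ) := {p : ℝ × ℝ × ℝ × ℝ |
        (p.2.2.1 = 0 ∨ p.2.2.1 = 1) ∧ (p.2.2.2 = 0 ∨ p.2.2.2 = 1) ∧
        p.2.2.1 + p.2.2.2 ≤ 1 ∧
        (p.2.2.1 = 1 ∧ p.2.2.2 = 0 → p.1 + dij ≤ p.2.1 ∧ p.2.1 - p.1 ≤ 1 - dji) ∧
        (p.2.2.1 = 0 ∧ p.2.2.2 = 1 → p.2.1 + dji ≤ p.1 ∧ p.1 - p.2.1 ≤ 1 - dij) ∧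
        (p.2.2.1 = 0 ∧ p.2.2.2 = 0 → p.1 - p.2.1 ≤ 1 - dij ∧ p.2.1 - p.1 ≤ 1 - dji)} with hZ
    have hz1 : ((v + a1, v, 1, 0) : ℝ × ℝ × ℝ × ℝ) ∈ Z := by
      refine ⟨Or.inr rfl, Or.inl rfl, by norm_num, ?_, ?_, ?_⟩
      · intro _
        constructor
        · show v + a1 + dij ≤ v
          rw [ha1]; nlinarith [hp1]
        · show v - (v + a1) ≤ 1 - dji
          rw [ha1]; nlinarith [hp2]
      · rintro ⟨h, -⟩; exact absurd h one_ne_zero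
      · rintro ⟨h, -⟩; exact absurd h one_ne_zero
    have hz2 : ((v + a2, v, 0, 1) : ℝ × ℝ × ℝ × ℝ) ∈ Z := by
      refine ⟨Or.inl rfl, Or.inr rfl, by norm_num, ?_, ?_, ?_⟩
      · rintro ⟨h, -⟩; exact absurd h zero_ne_one
      · intro _
        constructor
        · show v + dji ≤ v + a2
          rw [ha2]; nlinarith [hp2]
        · show v + a2 - v ≤ 1 - dij
          rw [ha2]; nlinarith [hp1]
      · rintro ⟨-, h⟩; exact absurd h one_ne_zero
    have hz0 : ((v + a0, v, 0, 0) : ℝ × ℝ × ℝ × ℝ) ∈ Z := by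
      refine ⟨Or.inl rfl, Or.inl rfl, by norm_num, ?_, ?_, ?_⟩
      · rintro ⟨h, -⟩; exact absurd h zero_ne_one
      · rintro ⟨-, h⟩; exact absurd h zero_ne_one
      · intro _
        constructor
        · show v + a0 - v ≤ 1 - dij
          rw [ha0]; nlinarith [hp1]
        · show v - (v + a0) ≤ 1 - dji
          rw [ha0]; nlinarith [hp2]
    have key := Finset.centerMass_mem_convexHull (Finset.univ : Finset (Fin 3))
      (w := ![x, y, 1 - x - y])
      (z := (![(v + a1, v, 1, 0), (v + a2, v, 0, 1), (v + a0, v, 0, 0)] :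
        Fin 3 → ℝ × ℝ × ℝ × ℝ))
      (by intro i _
          fin_cases i <;> [exact hx; exact hy; exact (by linarith : (0:ℝ) ≤ 1 - x - y)])
      (by simp only [Fin.sum_univ_three, Matrix.cons_val_zero, Matrix.cons_val_one,
            Matrix.head_cons, Matrix.cons_val_two, Matrix.tail_cons]; linarith)
      (by intro i _; fin_cases i <;> [exact hz1; exact hz2; exact hz0])
    have hsum : ∑ i : Fin 3, (![x, y, 1 - x - y] : Fin 3 → ℝ) i = 1 := by
      rw [Fin.sum_univ_three]
      simp only [Matrix.cons_val_zero, Matrix.cons_val_one, Matrix.head_cons,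
        Matrix.cons_val_two, Matrix.tail_cons]
      ring
    rw [Finset.centerMass_eq_of_sum_1 _ _ hsum] at key
    have hwt' : (1 - t) * (y - (1 - dji)) + t * (1 - dij - x) = u - v := by
      rw [← hL, ← hU]; exact hwt
    have h' : x * a1 + y * a2 + (1 - x - y) * a0 = u - v := by
      rw [ha1, ha2, ha0]
      linear_combination hwt'
    have hcomp : (∑ i : Fin 3, (![x, y, 1 - x - y] : Fin 3 → ℝ) i •
        (![(v + a1, v, 1, 0), (v + a2, v, 0, 1), (v + a0, v, 0, 0)] :
          Fin 3 → ℝ × ℝ × ℝ × ℝ) i) = ((u, v, x, y) : ℝ × ℝ × ℝ × ℝ) := by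
      rw [Fin.sum_univ_three]
      simp only [Matrix.cons_val_zero, Matrix.cons_val_one, Matrix.head_cons,
        Matrix.cons_val_two, Matrix.tail_cons, Prod.smul_mk, smul_eq_mul, Prod.mk_add_mk,
        Prod.mk.injEq]
      refine ⟨?_, ?_, ?_, ?_⟩
      · linear_combination h'
      · ring
      · ring
      · ring
    rwa [hcomp] at key
end

section
/- For any $d\in\overline{D}$, every point of $Q_{\mathrm{DL}}(d)$ belongs to $Q_{\mathrm{MTZ}}(d)$, i.e., $Q_{\mathrm{DL}}(d)\subseteq Q_{\mathrm{MTZ}}(d)$; consequently $P_{\mathrm{DL}}(d)\subseteq P_{\mathrm{MTZ}}(d)$. -/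
/-- For `d ∈ D̄`, the `d`-DL relaxation is contained in the `d`-MTZ relaxation,
and consequently `P_DL(d) ⊆ P_MTZ(d)`. -/
theorem stmt_14 (n : ℕ) (hn : 4 ≤ n + 1) (d : Fin (n + 1) → Fin (n + 1) → ℝ)
    (hd : memDbar d) :
    (∀ (x : Fin (n + 1) → Fin (n + 1) → ℝ) (u : Fin (n + 1) → ℝ),
      memPAP x →
      (∀ i j : Fin (n + 1), i ≠ 0 → j ≠ 0 → i ≠ j →
        u i - u j + x i j + (1 - d i j - d j i) * x j i ≤ 1 - d i j) →
      ∀ i j : Fin (n + 1), i ≠ 0 → j ≠ 0 → i ≠ j →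
        u i - u j + d i j ≤ 1 - x i j) ∧
    (∀ x : Fin (n + 1) → Fin (n + 1) → ℝ, memPAP x →
      (∃ u : Fin (n + 1) → ℝ, ∀ i j : Fin (n + 1), i ≠ 0 → j ≠ 0 → i ≠ j →
        u i - u j + x i j + (1 - d i j - d j i) * x j i ≤ 1 - d i j) →
      ∃ u : Fin (n + 1) → ℝ, ∀ i j : Fin (n + 1), i ≠ 0 → j ≠ 0 → i ≠ j →
        u i - u j + d i j ≤ 1 - x i j) := by
  have key : ∀ (x : Fin (n + 1) → Fin (n + 1) → ℝ) (u : Fin (n + 1) → ℝ),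
      memPAP x →
      (∀ i j : Fin (n + 1), i ≠ 0 → j ≠ 0 → i ≠ j →
        u i - u j + x i j + (1 - d i j - d j i) * x j i ≤ 1 - d i j) →
      ∀ i j : Fin (n + 1), i ≠ 0 → j ≠ 0 → i ≠ j →
        u i - u j + d i j ≤ 1 - x i j := by
    intro x u hx hDL i j hi hj hij
    have h2 : d i j + d j i ≤ 1 := by
      have := hd.2 2 (fun m => if m = 0 then i else j) ?_
      · have hc : cycleSum d 2 (fun m => if m = 0 then i else j) = d i j + d j i := by
          simp [cycleSum, Finset.sum_range_succ]
        linarith [this, hc ▸ this]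
      · refine ⟨⟨le_refl 2, ?_⟩, ?_⟩
        · intro a ha b hb hab
          interval_cases a <;> interval_cases b <;> simp_all
        · intro a ha
          interval_cases a <;> simp [hi, hj]
    have hx0 : 0 ≤ x j i := (hx.1 j i (Ne.symm hij)).1
    have := hDL i j hi hj hij
    nlinarith
  exact ⟨key, fun x hx ⟨u, hu⟩ => ⟨u, key x u hx hu⟩⟩
end

section
/- For $b\in\overline{B}$, the projection onto the $x$-variables of $Q_{\mathrm{SCF}}(b)=\{(x,f)\in P_{\mathrm{AP}}\times\mathbb{R}^A_+ : \sum_{ij\in\delta^+(i)}f_{ij}-\sum_{ji\in\delta^-(i)}f_{ji}=-b_i\ \forall i\in N_1,\ f_{ij}\le x_{ij}\ \forall ij\in A\}$ equals $P_{\mathrm{SCF}}(b)=\{x\in P_{\mathrm{AP}} : \sum_{ij\in\delta^+(S)}x_{ij}\ge\sum_{i\in S}b_i\ \text{for all}\ S\subseteq N_1,\ |S|\ge 2\}$. -/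
/-- Membership in `B̄`: nonnegative demands on `N₁` summing to 1. -/
def memBbar {n : ℕ} (b : Fin (n + 1) → ℝ) : Prop :=
  (∀ i : Fin (n + 1), i ≠ 0 → 0 ≤ b i) ∧ ∑ i ∈ Finset.univ.erase 0, b i = 1


open Finset

section helpers

variable {n : ℕ}

private lemma pairSwap (S : Finset (Fin (n+1))) (F : Fin (n+1) → Fin (n+1) → ℝ) :
    ∑ i ∈ S, ∑ j ∈ S.erase i, F i j = ∑ i ∈ S, ∑ j ∈ S.erase i, F j i :=
  Finset.sum_comm' (fun a c => by
    simp only [Finset.mem_erase]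
    constructor
    · rintro ⟨h1, h2, h3⟩; exact ⟨⟨fun h => h2 h.symm, h1⟩, h3⟩
    · rintro ⟨⟨h1, h2⟩, h3⟩; exact ⟨h2, fun h => h1 h.symm, h3⟩)

private lemma erase_split (S : Finset (Fin (n+1))) (i : Fin (n+1)) (hi : i ∈ S) :
    (univ.erase i) = Sᶜ ∪ S.erase i := by
  ext j
  simp only [mem_erase, mem_univ, and_true, mem_union, mem_compl]
  constructor
  · intro hj
    by_cases hjS : j ∈ S
    · exact Or.inr ⟨hj, hjS⟩
    · exact Or.inl hjS
  · rintro (hj | ⟨hj, _⟩)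
    · exact fun h => hj (h ▸ hi)
    · exact hj

private lemma erase_disj (S : Finset (Fin (n+1))) (i : Fin (n+1)) :
    Disjoint (Sᶜ) (S.erase i) :=
  Finset.disjoint_left.mpr fun j hj hj' => (Finset.mem_compl.mp hj) (Finset.mem_of_mem_erase hj')

/-- outgoing cut = incoming cut for `P_AP` points -/
private lemma cut_symm (x : Fin (n+1) → Fin (n+1) → ℝ) (hx : memPAP x)
    (S : Finset (Fin (n+1))) :
    ∑ i ∈ S, ∑ j ∈ Sᶜ, x i j = ∑ i ∈ S, ∑ j ∈ Sᶜ, x j i := by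
  have h1 : ∑ i ∈ S, (∑ j ∈ Sᶜ, x i j + ∑ j ∈ S.erase i, x i j) = (S.card : ℝ) := by
    calc ∑ i ∈ S, (∑ j ∈ Sᶜ, x i j + ∑ j ∈ S.erase i, x i j)
        = ∑ i ∈ S, (1:ℝ) := Finset.sum_congr rfl (fun i hi => by
          rw [← Finset.sum_union (erase_disj S i), ← erase_split S i hi]; exact hx.2.1 i)
      _ = (S.card : ℝ) := by simp
  have h2 : ∑ i ∈ S, (∑ j ∈ Sᶜ, x j i + ∑ j ∈ S.erase i, x j i) = (S.card : ℝ) := by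
    calc ∑ i ∈ S, (∑ j ∈ Sᶜ, x j i + ∑ j ∈ S.erase i, x j i)
        = ∑ i ∈ S, (1:ℝ) := Finset.sum_congr rfl (fun i hi => by
          rw [← Finset.sum_union (erase_disj S i), ← erase_split S i hi]; exact hx.2.2 i)
      _ = (S.card : ℝ) := by simp
  rw [Finset.sum_add_distrib] at h1 h2
  have h3 := pairSwap S (fun i j => x i j)
  linarith

private lemma max_add_le (u v : ℝ) : max (u + v) 0 ≤ max u 0 + max v 0 :=
  max_le (add_le_add (le_max_left u 0) (le_max_left v 0))
    (add_nonneg (le_max_right u 0) (le_max_right v 0))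

private lemma max_sub_max_le (a c : ℝ) : max (max a 0 - max c 0) 0 ≤ max (a - c) 0 := by
  refine max_le ?_ (le_max_right _ _)
  have h := max_add_le c (a - c)
  have h2 : c + (a - c) = a := by ring
  rw [h2] at h
  linarith

/-- Key combinatorial inequality (the dual/"level sets" step). -/
private lemma key_aux (b : Fin (n+1) → ℝ) (x : Fin (n+1) → Fin (n+1) → ℝ)
    (hcut : ∀ S : Finset (Fin (n+1)), (0 : Fin (n+1)) ∉ S → S.Nonempty →
      ∑ i ∈ S, b i ≤ ∑ i ∈ S, ∑ j ∈ Sᶜ, x j i) :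
    ∀ (k : ℕ) (z : Fin (n+1) → ℝ), ((univ.image z).filter (fun v => 0 < v)).card ≤ k →
      (∀ i, 0 ≤ z i) → z 0 = 0 →
      ∑ i ∈ univ.erase 0, b i * z i ≤ ∑ i, ∑ j, x i j * max (z j - z i) 0 := by
  intro k
  induction k with
  | zero =>
    intro z hcard hz hz0
    have hzero : ∀ i, z i = 0 := by
      intro i
      by_contra h
      have hpos : 0 < z i := lt_of_le_of_ne (hz i) (Ne.symm h)
      have hmem : z i ∈ (univ.image z).filter (fun v => 0 < v) := by
        simp only [Finset.mem_filter, Finset.mem_image]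
        exact ⟨⟨i, Finset.mem_univ i, rfl⟩, hpos⟩
      have := Finset.card_pos.mpr ⟨_, hmem⟩
      omega
    simp [hzero]
  | succ k ih =>
    intro z hcard hz hz0
    by_cases hk : ((univ.image z).filter (fun v => 0 < v)).card ≤ k
    · exact ih z hk hz hz0
    · set T := (univ.image z).filter (fun v => 0 < v) with hT
      have hTne : T.Nonempty := by
        rw [← Finset.card_pos]; omega
      set t := T.min' hTne with htdef
      have htT : t ∈ T := Finset.min'_mem T hTne
      have ht : 0 < t := (Finset.mem_filter.mp htT).2
      have hmin : ∀ i, 0 < z i → t ≤ z i := by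
        intro i hi
        apply Finset.min'_le
        simp only [hT, Finset.mem_filter, Finset.mem_image]
        exact ⟨⟨i, Finset.mem_univ i, rfl⟩, hi⟩
      set S : Finset (Fin (n+1)) := univ.filter (fun i => 0 < z i) with hS
      have hmemS : ∀ a, a ∈ S ↔ 0 < z a := by intro a; simp [hS]
      have h0S : (0 : Fin (n+1)) ∉ S := by simp [hS, hz0]
      have hSne : S.Nonempty := by
        obtain ⟨i, _, hi⟩ := Finset.mem_image.mp (Finset.mem_filter.mp htT).1
        exact ⟨i, (hmemS i).mpr (by rw [hi]; exact ht)⟩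
      set z' : Fin (n+1) → ℝ := fun i => if 0 < z i then z i - t else 0 with hz'
      have hz'nn : ∀ i, 0 ≤ z' i := by
        intro i; simp only [hz']; split
        · linarith [hmin i ‹_›]
        · exact le_refl 0
      have hz'0 : z' 0 = 0 := by simp [hz', hz0]
      have hsub : (univ.image z').filter (fun v => 0 < v) ⊆ (T.erase t).image (fun v => v - t) := by
        intro v hv
        obtain ⟨hvim, hvpos⟩ := Finset.mem_filter.mp hv
        obtain ⟨i, _, hi⟩ := Finset.mem_image.mp hvim
        by_cases hzi : 0 < z i
        · have hv' : v = z i - t := by rw [← hi]; simp [hz', hzi]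
          refine Finset.mem_image.mpr ⟨z i, Finset.mem_erase.mpr ⟨?_, ?_⟩, hv'.symm ▸ rfl⟩
          · intro h; rw [h] at hv'; simp at hv'; exact absurd hv' (by linarith)
          · exact Finset.mem_filter.mpr ⟨Finset.mem_image.mpr ⟨i, Finset.mem_univ i, rfl⟩, hzi⟩
        · exfalso; rw [← hi] at hvpos; simp only [hz', if_neg hzi] at hvpos; exact lt_irrefl 0 hvpos
      have hcard' : ((univ.image z').filter (fun v => 0 < v)).card ≤ k := by
        have h1 := Finset.card_le_card hsub
        have h2 := Finset.card_image_le (s := T.erase t) (f := fun v => v - t)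
        have h3 : (T.erase t).card = T.card - 1 := Finset.card_erase_of_mem htT
        omega
      -- per-pair identity
      have hpair : ∀ i j : Fin (n+1),
          max (z j - z i) 0 = max (z' j - z' i) 0 + (if j ∈ S ∧ i ∉ S then t else 0) := by
        intro i j
        by_cases hi : 0 < z i <;> by_cases hj : 0 < z j
        · rw [if_neg (by simp [hmemS, hi])]
          simp only [hz', if_pos hi, if_pos hj]
          have e : (z j - t) - (z i - t) = z j - z i := by ring
          rw [e, add_zero]
        · have hj0 : z j = 0 := le_antisymm (not_lt.mp hj) (hz j)
          rw [if_neg (by simp [hmemS, hj])]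
          simp only [hz', if_pos hi, if_neg hj]
          rw [hj0, max_eq_right (by linarith), max_eq_right (by linarith [hmin i hi]), add_zero]
        · have hi0 : z i = 0 := le_antisymm (not_lt.mp hi) (hz i)
          rw [if_pos ⟨(hmemS j).mpr hj, fun h => hi ((hmemS i).mp h)⟩]
          simp only [hz', if_pos hj, if_neg hi]
          rw [hi0, sub_zero, sub_zero, max_eq_left (by linarith [hmin j hj]),
            max_eq_left (by linarith [hmin j hj])]
          ring
        · have hi0 : z i = 0 := le_antisymm (not_lt.mp hi) (hz i)
          have hj0 : z j = 0 := le_antisymm (not_lt.mp hj) (hz j)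
          rw [if_neg (by simp [hmemS, hj])]
          simp only [hz', if_neg hi, if_neg hj]
          rw [hi0, hj0, add_zero]
      -- LHS decomposition
      have hLHS : ∑ i ∈ univ.erase 0, b i * z i
          = (∑ i ∈ univ.erase 0, b i * z' i) + t * ∑ i ∈ S, b i := by
        have hterm : ∀ i, b i * z i = b i * z' i + (if i ∈ S then t * b i else 0) := by
          intro i
          by_cases hi : 0 < z i
          · rw [if_pos ((hmemS i).mpr hi)]
            simp only [hz', if_pos hi]; ring
          · have hi0 : z i = 0 := le_antisymm (not_lt.mp hi) (hz i)
            rw [if_neg (fun h => hi ((hmemS i).mp h))]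
            simp only [hz', if_neg hi]
            rw [hi0]; ring
        rw [Finset.sum_congr rfl (fun i _ => hterm i), Finset.sum_add_distrib]
        congr 1
        rw [Finset.sum_ite_mem]
        have hSint : (univ.erase (0 : Fin (n+1))) ∩ S = S := by
          ext a
          simp only [mem_inter, mem_erase, mem_univ, and_true]
          refine ⟨fun h => h.2, fun h => ⟨fun h0 => ?_, h⟩⟩
          · rw [h0] at h; exact h0S h
        rw [hSint, Finset.mul_sum]
      -- RHS decomposition
      have hRHS : ∑ i, ∑ j, x i j * max (z j - z i) 0
          = (∑ i, ∑ j, x i j * max (z' j - z' i) 0) + t * ∑ i ∈ S, ∑ j ∈ Sᶜ, x j i := by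
        have hterm : ∀ i j, x i j * max (z j - z i) 0
            = x i j * max (z' j - z' i) 0
              + (if i ∈ Sᶜ then (if j ∈ S then x i j * t else 0) else 0) := by
          intro i j
          rw [hpair i j, mul_add]
          congr 1
          by_cases h1 : i ∈ S <;> by_cases h2 : j ∈ S <;>
            simp [h1, h2, Finset.mem_compl]
        simp_rw [hterm, Finset.sum_add_distrib]
        congr 1
        have hinner : ∀ i : Fin (n+1),
            ∑ j, (if i ∈ Sᶜ then (if j ∈ S then x i j * t else 0) else 0)
            = if i ∈ Sᶜ then ∑ j ∈ S, x i j * t else 0 := by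
          intro i
          by_cases h : i ∈ Sᶜ
          · simp only [if_pos h]
            rw [Finset.sum_ite_mem, Finset.univ_inter]
          · simp [h]
        rw [Finset.sum_congr rfl (fun i _ => hinner i), Finset.sum_ite_mem, Finset.univ_inter]
        rw [Finset.sum_comm]
        rw [Finset.mul_sum]
        refine Finset.sum_congr rfl fun i _ => ?_
        rw [Finset.mul_sum]
        exact Finset.sum_congr rfl fun j _ => by ring
      rw [hLHS, hRHS]
      have hc := hcut S h0S hSne
      have hstep : t * ∑ i ∈ S, b i ≤ t * ∑ i ∈ S, ∑ j ∈ Sᶜ, x j i :=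
        mul_le_mul_of_nonneg_left hc ht.le
      have hih := ih z' hcard' hz'nn hz'0
      linarith

end helpers

/-- For `b ∈ B̄`, the projection of `Q_SCF(b)` onto the `x`-variables is
`P_SCF(b)`, given by the cut inequalities. -/
theorem stmt_15 (n : ℕ) (hn : 4 ≤ n + 1) (b : Fin (n + 1) → ℝ) (hb : memBbar b)
    (x : Fin (n + 1) → Fin (n + 1) → ℝ) (hx : memPAP x) :
    (∃ f : Fin (n + 1) → Fin (n + 1) → ℝ,
      (∀ i j : Fin (n + 1), i ≠ j → 0 ≤ f i j ∧ f i j ≤ x i j) ∧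
      (∀ i : Fin (n + 1), i ≠ 0 →
        ∑ j ∈ Finset.univ.erase i, f i j - ∑ j ∈ Finset.univ.erase i, f j i = -(b i)))
    ↔ (∀ S : Finset (Fin (n + 1)), (0 : Fin (n + 1)) ∉ S → 2 ≤ S.card →
        ∑ i ∈ S, b i ≤ ∑ i ∈ S, ∑ j ∈ Sᶜ, x i j) := by
  constructor
  · -- forward: flow exists → cut inequalities
    rintro ⟨f, hf, hflow⟩ S h0S _
    have hSsum : ∑ i ∈ S, ((∑ j ∈ univ.erase i, f i j) - ∑ j ∈ univ.erase i, f j i)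
        = -∑ i ∈ S, b i := by
      rw [← Finset.sum_neg_distrib]
      exact Finset.sum_congr rfl fun i hi => hflow i (fun h => h0S (h ▸ hi))
    have hsplit : ∀ i ∈ S, ((∑ j ∈ univ.erase i, f i j) - ∑ j ∈ univ.erase i, f j i)
        = ((∑ j ∈ Sᶜ, f i j) + ∑ j ∈ S.erase i, f i j)
          - ((∑ j ∈ Sᶜ, f j i) + ∑ j ∈ S.erase i, f j i) := by
      intro i hi
      rw [erase_split S i hi, Finset.sum_union (erase_disj S i),
        Finset.sum_union (erase_disj S i)]
    rw [Finset.sum_congr rfl hsplit] at hSsum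
    simp only [Finset.sum_sub_distrib, Finset.sum_add_distrib] at hSsum
    have hps := pairSwap S f
    have hA : 0 ≤ ∑ i ∈ S, ∑ j ∈ Sᶜ, f i j := by
      refine Finset.sum_nonneg fun i hi => Finset.sum_nonneg fun j hj => ?_
      exact (hf i j (fun h => (Finset.mem_compl.mp hj) (h ▸ hi))).1
    have hB : ∑ i ∈ S, ∑ j ∈ Sᶜ, f j i ≤ ∑ i ∈ S, ∑ j ∈ Sᶜ, x j i := by
      refine Finset.sum_le_sum fun i hi => Finset.sum_le_sum fun j hj => ?_
      exact (hf j i (fun h => (Finset.mem_compl.mp hj) (h.symm ▸ hi))).2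
    have hsym := cut_symm x hx S
    linarith
  · -- backward: cut inequalities → flow exists
    intro hcut
    classical
    set c : Fin (n+1) × Fin (n+1) → ℝ := fun p => if p.1 = p.2 then 0 else x p.1 p.2 with hcdef
    have hc0 : ∀ p, 0 ≤ c p := by
      rintro ⟨i, j⟩
      simp only [hcdef]
      split
      · exact le_refl 0
      · exact (hx.1 i j (by assumption)).1
    set K : Set ((Fin (n+1) × Fin (n+1)) → ℝ) := Set.univ.pi (fun p => Set.Icc 0 (c p))
      with hKdef
    have hKconv : Convex ℝ K := convex_pi (fun p _ => convex_Icc _ _)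
    have hKcomp : IsCompact K := isCompact_univ_pi (fun p => isCompact_Icc)
    set L : ((Fin (n+1) × Fin (n+1)) → ℝ) →ₗ[ℝ] (Fin (n+1) → ℝ) :=
      { toFun := fun g i => (∑ j, g (j, i)) - (∑ j, g (i, j)),
        map_add' := by
          intro g h; funext i
          simp only [Pi.add_apply]
          rw [Finset.sum_add_distrib, Finset.sum_add_distrib]; ring,
        map_smul' := by
          intro r g; funext i
          simp only [Pi.smul_apply, smul_eq_mul, RingHom.id_apply]
          rw [← Finset.mul_sum, ← Finset.mul_sum]; ring } with hLdef
    have hLapp : ∀ (g : (Fin (n+1) × Fin (n+1)) → ℝ) (i : Fin (n+1)),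
        L g i = (∑ j, g (j, i)) - (∑ j, g (i, j)) := fun g i => rfl
    set d : Fin (n+1) → ℝ := fun i => if i = 0 then -1 else b i with hddef
    have hdD : d ∈ L '' K := by
      by_contra hdD
      have hDconv : Convex ℝ (L '' K) := hKconv.linear_image L
      have hDclosed : IsClosed (L '' K) :=
        (hKcomp.image (LinearMap.continuous_of_finiteDimensional L)).isClosed
      obtain ⟨φ, u, hu1, hu2⟩ := geometric_hahn_banach_closed_point hDconv hDclosed hdD
      set y : Fin (n+1) → ℝ := fun i => φ (Pi.single i 1) with hydef
      have hsingle : ∀ i : Fin (n+1), (fun j => if i = j then (1:ℝ) else 0) = Pi.single i 1 := by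
        intro i; funext j
        rw [Pi.single_apply]
        by_cases h : i = j
        · rw [if_pos h, if_pos h.symm]
        · rw [if_neg h, if_neg (Ne.symm h)]
      have hφ : ∀ v : Fin (n+1) → ℝ, φ v = ∑ i, v i * y i := by
        intro v
        conv_lhs => rw [pi_eq_sum_univ v]
        rw [map_sum]
        exact Finset.sum_congr rfl fun i _ => by
          rw [hsingle i, map_smul, smul_eq_mul]
      have hφd : φ d = (∑ i ∈ univ.erase 0, b i * y i) - y 0 := by
        rw [hφ d, ← Finset.sum_erase_add univ _ (Finset.mem_univ (0 : Fin (n+1)))]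
        have h1 : ∑ i ∈ univ.erase (0 : Fin (n+1)), d i * y i
            = ∑ i ∈ univ.erase 0, b i * y i :=
          Finset.sum_congr rfl fun i hi => by
            simp only [hddef]; rw [if_neg (Finset.ne_of_mem_erase hi)]
        have h2 : d 0 = -1 := by simp [hddef]
        rw [h1, h2]; ring
      set g : (Fin (n+1) × Fin (n+1)) → ℝ := fun p => if 0 < y p.2 - y p.1 then c p else 0
        with hgdef
      have hgK : g ∈ K := by
        rw [hKdef, Set.mem_univ_pi]
        intro p
        simp only [hgdef]
        split
        · exact ⟨hc0 p, le_refl _⟩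
        · exact ⟨le_refl 0, hc0 p⟩
      have hsum_formula : ∀ h : (Fin (n+1) × Fin (n+1)) → ℝ,
          φ (L h) = ∑ i, ∑ j, h (i, j) * (y j - y i) := by
        intro h
        rw [hφ]
        have e : ∀ i, L h i * y i = (∑ j, h (j, i) * y i) - ∑ j, h (i, j) * y i := by
          intro i; rw [hLapp, sub_mul, Finset.sum_mul, Finset.sum_mul]
        rw [Finset.sum_congr rfl fun i _ => e i, Finset.sum_sub_distrib, Finset.sum_comm,
          ← Finset.sum_sub_distrib]
        refine Finset.sum_congr rfl fun i _ => ?_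
        rw [← Finset.sum_sub_distrib]
        exact Finset.sum_congr rfl fun j _ => by ring
      have hφLg : φ (L g) = ∑ i, ∑ j, c (i, j) * max (y j - y i) 0 := by
        rw [hsum_formula g]
        refine Finset.sum_congr rfl fun i _ => Finset.sum_congr rfl fun j _ => ?_
        simp only [hgdef]
        by_cases h : 0 < y j - y i
        · rw [if_pos h, max_eq_left h.le]
        · rw [if_neg h, max_eq_right (not_lt.mp h), mul_zero, zero_mul]
      have hlt : ∑ i, ∑ j, c (i, j) * max (y j - y i) 0
          < (∑ i ∈ univ.erase 0, b i * y i) - y 0 := by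
        rw [← hφLg, ← hφd]
        exact lt_trans (hu1 _ ⟨g, hgK, rfl⟩) hu2
      set z : Fin (n+1) → ℝ := fun i => max (y i - y 0) 0 with hzdef
      have hz0 : z 0 = 0 := by simp [hzdef]
      have hznn : ∀ i, 0 ≤ z i := fun i => le_max_right _ _
      have hcutIn : ∀ S : Finset (Fin (n+1)), (0 : Fin (n+1)) ∉ S → S.Nonempty →
          ∑ i ∈ S, b i ≤ ∑ i ∈ S, ∑ j ∈ Sᶜ, x j i := by
        intro S h0 hne
        rw [← cut_symm x hx S]
        by_cases h2 : 2 ≤ S.card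
        · exact hcut S h0 h2
        · have h1 : S.card = 1 := by
            have := Finset.card_pos.mpr hne; omega
          obtain ⟨a, ha⟩ := Finset.card_eq_one.mp h1
          subst ha
          rw [Finset.sum_singleton, Finset.sum_singleton]
          have hcompl : ({a} : Finset (Fin (n+1)))ᶜ = univ.erase a := by
            ext j; simp
          rw [hcompl, hx.2.1 a]
          have ha0 : a ≠ 0 := fun h => h0 (Finset.mem_singleton.mpr h.symm)
          calc b a ≤ ∑ i ∈ univ.erase 0, b i :=
              Finset.single_le_sum (fun i hi => hb.1 i (Finset.ne_of_mem_erase hi))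
                (Finset.mem_erase.mpr ⟨ha0, Finset.mem_univ a⟩)
            _ = 1 := hb.2
      have e1 : ∑ i ∈ univ.erase (0 : Fin (n+1)), b i * (y i - y 0)
          = (∑ i ∈ univ.erase 0, b i * y i) - y 0 := by
        simp only [mul_sub]
        rw [Finset.sum_sub_distrib, ← Finset.sum_mul, hb.2, one_mul]
      have e2 : (∑ i ∈ univ.erase (0 : Fin (n+1)), b i * (y i - y 0))
          ≤ ∑ i ∈ univ.erase 0, b i * z i :=
        Finset.sum_le_sum fun i hi =>
          mul_le_mul_of_nonneg_left (le_max_left _ _) (hb.1 i (Finset.ne_of_mem_erase hi))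
      have e3 := key_aux b x hcutIn (((univ.image z).filter (fun v => 0 < v)).card) z
        le_rfl hznn hz0
      have e4 : ∑ i, ∑ j, x i j * max (z j - z i) 0
          ≤ ∑ i, ∑ j, c (i, j) * max (y j - y i) 0 := by
        refine Finset.sum_le_sum fun i _ => Finset.sum_le_sum fun j _ => ?_
        by_cases hij : i = j
        · subst hij
          simp [hcdef]
        · have hcij : c (i, j) = x i j := by simp only [hcdef]; rw [if_neg hij]
          rw [hcij]
          refine mul_le_mul_of_nonneg_left ?_ (hx.1 i j hij).1
          simp only [hzdef]
          have h5 := max_sub_max_le (y j - y 0) (y i - y 0)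
          have h6 : (y j - y 0) - (y i - y 0) = y j - y i := by ring
          rw [h6] at h5
          exact h5
      linarith
    obtain ⟨g, hgK, hLg⟩ := hdD
    refine ⟨fun i j => g (i, j), fun i j hij => ?_, fun i hi => ?_⟩
    · have hm := hgK (i, j) (Set.mem_univ _)
      have hcij : c (i, j) = x i j := by simp only [hcdef]; rw [if_neg hij]
      exact ⟨hm.1, hcij ▸ hm.2⟩
    · have h := congrFun hLg i
      rw [hLapp] at h
      have hdi : d i = b i := by simp only [hddef]; rw [if_neg hi]
      rw [hdi] at h
      have e1 : ∑ j ∈ univ.erase i, g (i, j) = (∑ j, g (i, j)) - g (i, i) := by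
        rw [← Finset.sum_erase_add univ _ (Finset.mem_univ i)]; ring
      have e2 : ∑ j ∈ univ.erase i, g (j, i) = (∑ j, g (j, i)) - g (i, i) := by
        rw [← Finset.sum_erase_add univ _ (Finset.mem_univ i)]; ring
      rw [e1, e2]
      linarith
end

section
/- For any distinct $b,b'\in B$ (so $b,b'>0$, $\sum_i b_i=\sum_i b'_i=1$, $b\ne b'$), neither $P_{\mathrm{SCF}}(b)\subseteq P_{\mathrm{SCF}}(b')$ nor $P_{\mathrm{SCF}}(b')\subseteq P_{\mathrm{SCF}}(b)$ holds; i.e., the formulations $P_{\mathrm{SCF}}(b)$ and $P_{\mathrm{SCF}}(b')$ are incomparable. -/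
/-- Membership in `P_SCF(b)`: `x ∈ P_AP` satisfying the cut inequalities
`∑_{ij ∈ δ⁺(S)} x_{ij} ≥ ∑_{i ∈ S} b_i` for all `S ⊆ N₁` with `|S| ≥ 2`. -/
def memPSCF {n : ℕ} (b : Fin (n + 1) → ℝ) (x : Fin (n + 1) → Fin (n + 1) → ℝ) : Prop :=
  memPAP x ∧ ∀ S : Finset (Fin (n + 1)), (0 : Fin (n + 1)) ∉ S → 2 ≤ S.card →
    ∑ i ∈ S, b i ≤ ∑ i ∈ S, ∑ j ∈ Sᶜ, x i j

/-!
If `b ≠ b'`, the vector `b' - b` sums to zero over `N₁`, so some pair `S = {p, q} ⊆ N₁` has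
`b p + b q < b' p + b' q`; relabelling the nodes, `p = 1` and `q = 2`. Put weight
`t = b 1 + b 2` on the tour `0 → 1 → ⋯ → n → 0` and `1 - t` on the permutation with cycles
`(1 2)` and `(0 3 4 ⋯ n)`. Every `S ⊆ N₁` with `|S| ≥ 2` is left by the tour and, unless
`S = {1, 2}`, by the second permutation, so its outflow is `1 ≥ b(S)`; the outflow of `{1, 2}`
is `t = b(S) < b'(S)`.
-/

open Finset Equiv

namespace SCF

theorem exists_perm_apply_eq_of_ne {α : Type*} [DecidableEq α] {c a₁ a₂ b₁ b₂ : α}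
    (ha : a₁ ≠ a₂) (hb : b₁ ≠ b₂) (hca₁ : c ≠ a₁) (hca₂ : c ≠ a₂) (hcb₁ : c ≠ b₁)
    (hcb₂ : c ≠ b₂) : ∃ π : Perm α, π c = c ∧ π a₁ = b₁ ∧ π a₂ = b₂ := by
  refine ⟨swap a₁ b₁ * swap a₂ (swap a₁ b₁ b₂), ?_, ?_, ?_⟩ <;>
    simp only [Perm.mul_apply, swap_apply_def] <;> split_ifs <;> simp_all

theorem exists_pair_add_pos {ι : Type*} {s : Finset ι} {η : ι → ℝ} (hs : 3 ≤ #s)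
    (hsum : ∑ i ∈ s, η i = 0) (hne : ∃ i ∈ s, η i ≠ 0) :
    ∃ p ∈ s, ∃ q ∈ s, p ≠ q ∧ 0 < η p + η q := by
  classical
  obtain ⟨p, hp, hpmax⟩ := s.exists_max_image η (card_pos.1 (by omega))
  have hp_pos : 0 < η p := by
    by_contra! h
    obtain ⟨i, hi, hi0⟩ := hne
    exact hi0 ((sum_eq_zero_iff_of_nonpos fun j hj => (hpmax j hj).trans h).1 hsum i hi)
  have hcard : 2 ≤ #(s.erase p) := by rw [card_erase_of_mem hp]; omega
  obtain ⟨q, hq, hqmax⟩ := (s.erase p).exists_max_image η (card_pos.1 (by omega))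
  refine ⟨p, hp, q, mem_of_mem_erase hq, (ne_of_mem_erase hq).symm, ?_⟩
  -- the remaining entries are at most `η q`, and there are at least two of them
  have hrest : ∑ i ∈ s.erase p, η i ≤ #(s.erase p) * η q := by
    simpa using sum_le_card_nsmul _ _ _ hqmax
  rw [← add_sum_erase s η hp] at hsum
  have hcard' : (2 : ℝ) ≤ #(s.erase p) := by exact_mod_cast hcard
  rcases le_or_gt 0 (η q) with hq0 | hq0
  · linarith
  · nlinarith

variable {n : ℕ}

section Relabel

variable (π : Perm (Fin (n + 1)))

theorem memPAP_relabel {x : Fin (n + 1) → Fin (n + 1) → ℝ} (h : memPAP x) :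
    memPAP fun i j => x (π i) (π j) := by
  obtain ⟨hbound, hrow, hcol⟩ := h
  have herase : ∀ i j, j ∈ univ.erase i ↔ π j ∈ univ.erase (π i) := by simp
  refine ⟨fun i j hij => hbound _ _ (π.injective.ne hij), fun i => ?_, fun i => ?_⟩
  · rw [← hrow (π i)]
    exact sum_equiv π (herase i) fun _ _ => rfl
  · rw [← hcol (π i)]
    exact sum_equiv π (herase i) fun _ _ => rfl

theorem memPSCF_relabel (hπ : π 0 = 0) {b : Fin (n + 1) → ℝ}
    {x : Fin (n + 1) → Fin (n + 1) → ℝ} (h : memPSCF b x) :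
    memPSCF (b ∘ π) fun i j => x (π i) (π j) := by
  refine ⟨memPAP_relabel π h.1, fun S h0 hS => ?_⟩
  have hmem : ∀ i, i ∈ S ↔ π i ∈ S.map π.toEmbedding := by simp
  have hmemc : ∀ i, i ∈ Sᶜ ↔ π i ∈ (S.map π.toEmbedding)ᶜ := by simp
  have h0' : (0 : Fin (n + 1)) ∉ S.map π.toEmbedding := by
    rwa [← hπ, ← hmem]
  have hcut := h.2 _ h0' (by rwa [card_map])
  rw [← sum_equiv π hmem fun _ _ => rfl] at hcut
  rwa [← sum_equiv π hmem fun i _ => sum_equiv π hmemc fun _ _ => rfl] at hcut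

theorem memPSCF_relabel_iff (hπ : π 0 = 0) (b : Fin (n + 1) → ℝ)
    (x : Fin (n + 1) → Fin (n + 1) → ℝ) :
    memPSCF (b ∘ π) (fun i j => x (π i) (π j)) ↔ memPSCF b x := by
  refine ⟨fun h => ?_, memPSCF_relabel π hπ⟩
  have hπ' : π⁻¹ 0 = 0 := by rw [Perm.inv_eq_iff_eq, hπ]
  simpa [Function.comp_def] using memPSCF_relabel π⁻¹ hπ' h

end Relabel

section PermMatrix

variable {α : Type*} [DecidableEq α]

theorem sum_permMatrix_apply (σ : Perm α) (i : α) (s : Finset α) :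
    ∑ j ∈ s, σ.permMatrix ℝ i j = if σ i ∈ s then 1 else 0 := by
  simp only [Perm.permMatrix, PEquiv.toMatrix_toPEquiv_apply, sum_pi_single']

variable [Fintype α]

/-- The flow `x(δ⁺(S))` leaving `S`. -/
def outflow (x : α → α → ℝ) (S : Finset α) : ℝ :=
  ∑ i ∈ S, ∑ j ∈ Sᶜ, x i j

theorem outflow_linearCombination (t s : ℝ) (x y : α → α → ℝ) (S : Finset α) :
    outflow (fun i j => t * x i j + s * y i j) S = t * outflow x S + s * outflow y S := by
  simp only [outflow, sum_add_distrib, mul_sum]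

theorem outflow_permMatrix (σ : Perm α) (S : Finset α) :
    outflow (σ.permMatrix ℝ) S = #{i ∈ S | σ i ∉ S} := by
  simp only [outflow, sum_permMatrix_apply, mem_compl, sum_boole]

theorem one_le_outflow_permMatrix {σ : Perm α} {S : Finset α} {i : α} (hi : i ∈ S)
    (hσi : σ i ∉ S) : 1 ≤ outflow (σ.permMatrix ℝ) S := by
  rw [outflow_permMatrix, Nat.one_le_cast, Nat.one_le_iff_ne_zero, ← pos_iff_ne_zero, card_pos]
  exact ⟨i, mem_filter.2 ⟨hi, hσi⟩⟩

theorem memPAP_convex_permMatrix {σ τ : Perm (Fin (n + 1))} (hσ : ∀ i, σ i ≠ i)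
    (hτ : ∀ i, τ i ≠ i) {t : ℝ} (ht₀ : 0 ≤ t) (ht₁ : t ≤ 1) :
    memPAP fun i j => t * σ.permMatrix ℝ i j + (1 - t) * τ.permMatrix ℝ i j := by
  have hrow : ∀ (ρ : Perm (Fin (n + 1))), (∀ i, ρ i ≠ i) → ∀ i,
      ∑ j ∈ univ.erase i, ρ.permMatrix ℝ i j = 1 := by
    intro ρ hρ i
    rw [sum_permMatrix_apply, if_pos (mem_erase.2 ⟨hρ i, mem_univ _⟩)]
  have hcol : ∀ (ρ : Perm (Fin (n + 1))), (∀ i, ρ i ≠ i) → ∀ i,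
      ∑ j ∈ univ.erase i, ρ.permMatrix ℝ j i = 1 := by
    intro ρ hρ i
    have hρ' : ∀ i, ρ⁻¹ i ≠ i := fun i h => hρ i (by rw [Perm.inv_eq_iff_eq] at h; exact h.symm)
    have htranspose : ∀ j, ρ.permMatrix ℝ j i = ρ⁻¹.permMatrix ℝ i j := fun j => by
      rw [← Matrix.transpose_permMatrix]; rfl
    simp only [htranspose, hrow ρ⁻¹ hρ' i]
  refine ⟨fun i j _ => ?_, fun i => ?_, fun i => ?_⟩
  · simp only [Perm.permMatrix, PEquiv.toMatrix_toPEquiv_apply, Pi.single_apply]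
    constructor <;> split_ifs <;> linarith
  · simp only [sum_add_distrib, ← mul_sum, hrow σ hσ, hrow τ hτ]
    ring
  · simp only [sum_add_distrib, ← mul_sum, hcol σ hσ, hcol τ hτ]
    ring

end PermMatrix

section Construction

theorem max'_add_one_notMem {S : Finset (Fin (n + 1))} (hS : S.Nonempty) (h0 : 0 ∉ S) :
    S.max' hS + 1 ∉ S := by
  intro h
  rcases eq_or_ne (S.max' hS) (Fin.last n) with hlast | hlast
  · rw [hlast, Fin.last_add_one] at h
    exact h0 h
  · exact (S.le_max' _ h).not_gt (Fin.lt_add_one_iff.2 (Fin.lt_last_iff_ne_last.2 hlast))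

theorem exists_finRotate_notMem {S : Finset (Fin (n + 1))} (hS : S.Nonempty) (h0 : 0 ∉ S) :
    ∃ i ∈ S, finRotate (n + 1) i ∉ S :=
  ⟨S.max' hS, S.max'_mem hS, by rw [finRotate_apply]; exact max'_add_one_notMem hS h0⟩

/-- The permutation `1 ↦ 2 ↦ 1`, `0 ↦ 3 ↦ 4 ↦ ⋯ ↦ n ↦ 0`. -/
def splitRotate (n : ℕ) : Perm (Fin (n + 1)) :=
  finRotate (n + 1) * swap 0 2

theorem add_one_ne_self (hn : 1 ≤ n) (i : Fin (n + 1)) : i + 1 ≠ i := by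
  rw [Ne, add_eq_left, Fin.one_eq_zero_iff]
  omega

theorem splitRotate_apply_of_ne {i : Fin (n + 1)} (h0 : i ≠ 0) (h2 : i ≠ 2) :
    splitRotate n i = i + 1 := by
  rw [splitRotate, Perm.mul_apply, swap_apply_of_ne_of_ne h0 h2, finRotate_apply]

theorem fin_numerals (hn : 3 ≤ n) :
    (1 : Fin (n + 1)) ≠ 0 ∧ (2 : Fin (n + 1)) ≠ 0 ∧ (1 : Fin (n + 1)) ≠ 2 ∧
      (1 + 1 : Fin (n + 1)) = 2 ∧ (2 + 1 : Fin (n + 1)) ≠ 0 ∧ (2 + 1 : Fin (n + 1)) ≠ 1 ∧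
      (2 + 1 : Fin (n + 1)) ≠ 2 := by
  simp (disch := omega) [Fin.ext_iff, Fin.val_add, Nat.mod_eq_of_lt]

theorem fin_eq_one_or_eq_two (hn : 3 ≤ n) {i : Fin (n + 1)} (hi : i ≤ 2) (h0 : i ≠ 0) :
    i = 1 ∨ i = 2 := by
  have h1 : ((1 : Fin (n + 1)) : ℕ) = 1 := by simp (disch := omega) [Nat.mod_eq_of_lt]
  have h2 : ((2 : Fin (n + 1)) : ℕ) = 2 := by simp (disch := omega) [Nat.mod_eq_of_lt]
  rw [Fin.le_def, h2] at hi
  rw [Ne, Fin.ext_iff, Fin.val_zero] at h0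
  rw [Fin.ext_iff, Fin.ext_iff, h1, h2]
  omega

theorem splitRotate_apply_ne_self (hn : 3 ≤ n) (i : Fin (n + 1)) : splitRotate n i ≠ i := by
  obtain ⟨-, -, h12, -, h30, -, -⟩ := fin_numerals hn
  by_cases hi0 : i = 0
  · simpa [hi0, splitRotate, finRotate_apply] using h30
  by_cases hi2 : i = 2
  · simpa [hi2, splitRotate, finRotate_apply] using h12
  rw [splitRotate_apply_of_ne hi0 hi2]
  exact add_one_ne_self (by omega) i

theorem splitRotate_apply_one (hn : 3 ≤ n) : splitRotate n 1 = 2 := by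
  obtain ⟨h10, -, h12, h112, -, -, -⟩ := fin_numerals hn
  rw [splitRotate_apply_of_ne h10 h12, h112]

theorem splitRotate_apply_two : splitRotate n 2 = 1 := by
  simp [splitRotate, finRotate_apply]

theorem exists_splitRotate_notMem (hn : 3 ≤ n) {S : Finset (Fin (n + 1))} (h0 : 0 ∉ S)
    (hS : 2 ≤ #S) (hS12 : S ≠ {1, 2}) : ∃ i ∈ S, splitRotate n i ∉ S := by
  have hne : S.Nonempty := card_pos.1 (by omega)
  refine ⟨S.max' hne, S.max'_mem hne, ?_⟩
  rcases le_or_gt (S.max' hne) 2 with hle | hgt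
  · refine absurd (eq_of_subset_of_card_le (fun i hi => ?_) ?_) hS12
    · have hi0 : i ≠ 0 := fun h => h0 (h ▸ hi)
      simpa using fin_eq_one_or_eq_two hn ((S.le_max' i hi).trans hle) hi0
    · exact (card_le_two).trans hS
  · have hmax0 : S.max' hne ≠ 0 := fun h => h0 (h ▸ S.max'_mem hne)
    rw [splitRotate_apply_of_ne hmax0 hgt.ne']
    exact max'_add_one_notMem hne h0

theorem outflow_finRotate_one_two (hn : 3 ≤ n) :
    outflow ((finRotate (n + 1)).permMatrix ℝ) {1, 2} = 1 := by
  obtain ⟨-, -, -, h112, -, h31, h32⟩ := fin_numerals hn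
  rw [outflow_permMatrix, filter_insert, filter_singleton]
  simp [finRotate_apply, h112, h31, h32]

theorem outflow_splitRotate_one_two (hn : 3 ≤ n) :
    outflow ((splitRotate n).permMatrix ℝ) {1, 2} = 0 := by
  rw [outflow_permMatrix, filter_insert, filter_singleton]
  simp [splitRotate_apply_one hn, splitRotate_apply_two]

theorem exists_memPSCF_not_memPSCF_of_one_two (hn : 3 ≤ n) {b b' : Fin (n + 1) → ℝ}
    (hb : ∀ i, i ≠ 0 → 0 ≤ b i) (hb_sum : ∑ i ∈ univ.erase 0, b i = 1)
    (hlt : b 1 + b 2 < b' 1 + b' 2) :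
    ∃ x : Fin (n + 1) → Fin (n + 1) → ℝ, memPSCF b x ∧ ¬ memPSCF b' x := by
  obtain ⟨h10, h20, h12, -⟩ := fin_numerals hn
  have hsum_le : ∀ S : Finset (Fin (n + 1)), 0 ∉ S → ∑ i ∈ S, b i ≤ 1 := fun S h0 =>
    hb_sum ▸ sum_le_sum_of_subset_of_nonneg (fun i hi => mem_erase.2 ⟨fun h => h0 (h ▸ hi),
      mem_univ i⟩) fun i hi _ => hb i (ne_of_mem_erase hi)
  have h0_12 : (0 : Fin (n + 1)) ∉ ({1, 2} : Finset _) := by simp [h10.symm, h20.symm]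
  set t := b 1 + b 2
  have ht₀ : 0 ≤ t := add_nonneg (hb 1 h10) (hb 2 h20)
  have ht₁ : t ≤ 1 := by simpa [sum_pair h12] using hsum_le {1, 2} h0_12
  set x : Fin (n + 1) → Fin (n + 1) → ℝ := fun i j =>
    t * (finRotate (n + 1)).permMatrix ℝ i j + (1 - t) * (splitRotate n).permMatrix ℝ i j
  have hsplit : ∀ S, outflow x S = t * outflow ((finRotate (n + 1)).permMatrix ℝ) S +
      (1 - t) * outflow ((splitRotate n).permMatrix ℝ) S :=
    outflow_linearCombination _ _ _ _
  have hx12 : outflow x {1, 2} = t := by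
    rw [hsplit, outflow_finRotate_one_two hn, outflow_splitRotate_one_two hn]
    ring
  have hAP : memPAP x := memPAP_convex_permMatrix (fun i => by
    rw [finRotate_apply]; exact add_one_ne_self (by omega) i) (splitRotate_apply_ne_self hn) ht₀ ht₁
  refine ⟨x, ⟨hAP, fun S h0 hS => ?_⟩, fun h => ?_⟩
  · change _ ≤ outflow x S
    by_cases hS12 : S = {1, 2}
    · rw [hS12, hx12, sum_pair h12]
    obtain ⟨i, hi, hσi⟩ := exists_finRotate_notMem (card_pos.1 (by omega)) h0
    obtain ⟨j, hj, hτj⟩ := exists_splitRotate_notMem hn h0 hS hS12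
    have hσ := one_le_outflow_permMatrix hi hσi
    have hτ := one_le_outflow_permMatrix hj hτj
    rw [hsplit]
    nlinarith [hsum_le S h0]
  · have hcut := h.2 {1, 2} h0_12 (card_pair h12).ge
    rw [sum_pair h12] at hcut
    change _ ≤ outflow x {1, 2} at hcut
    linarith

end Construction

theorem exists_memPSCF_not_memPSCF (hn : 3 ≤ n) {b b' : Fin (n + 1) → ℝ}
    (hb : ∀ i, i ≠ 0 → 0 ≤ b i) (hb_sum : ∑ i ∈ univ.erase 0, b i = 1)
    (hb'_sum : ∑ i ∈ univ.erase 0, b' i = 1) (hne : ∃ i, i ≠ 0 ∧ b i ≠ b' i) :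
    ∃ x : Fin (n + 1) → Fin (n + 1) → ℝ, memPSCF b x ∧ ¬ memPSCF b' x := by
  obtain ⟨p, hp, q, hq, hpq, hpos⟩ := exists_pair_add_pos (s := univ.erase 0) (η := b' - b)
    (by rw [card_erase_of_mem (mem_univ _), card_univ, Fintype.card_fin]; omega)
    (by simp [sum_sub_distrib, hb_sum, hb'_sum])
    (by obtain ⟨i, hi0, hi⟩ := hne; exact ⟨i, by simpa using hi0, sub_ne_zero.2 hi.symm⟩)
  obtain ⟨h10, h20, h12, -⟩ := fin_numerals hn
  obtain ⟨π, hπ0, hπ1, hπ2⟩ := exists_perm_apply_eq_of_ne h12 hpq h10.symm h20.symm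
    (ne_of_mem_erase hp).symm (ne_of_mem_erase hq).symm
  have hmem : ∀ i, i ∈ univ.erase 0 ↔ π i ∈ univ.erase 0 := fun i => by
    simp only [mem_erase, mem_univ, and_true, π.injective.ne_iff' hπ0]
  obtain ⟨x, hx, hx'⟩ := exists_memPSCF_not_memPSCF_of_one_two hn (b := b ∘ π) (b' := b' ∘ π)
    (fun i hi => hb _ ((π.injective.ne_iff' hπ0).2 hi))
    (by rw [← hb_sum]; exact sum_equiv π hmem fun _ _ => rfl)
    (by simp only [Function.comp_apply, hπ1, hπ2]; simp only [Pi.sub_apply] at hpos; linarith)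
  refine ⟨fun i j => x (π⁻¹ i) (π⁻¹ j), ?_, ?_⟩
  · rw [← memPSCF_relabel_iff π hπ0]
    simpa using hx
  · rw [← memPSCF_relabel_iff π hπ0]
    simpa using hx'

end SCF

/-- Distinct `b, b' ∈ B` always give incomparable formulations `P_SCF(b)`, `P_SCF(b')`. -/
theorem stmt_16 (n : ℕ) (hn : 4 ≤ n + 1)
    (b b' : Fin (n + 1) → ℝ)
    (hb : (∀ i : Fin (n + 1), i ≠ 0 → 0 < b i) ∧ ∑ i ∈ Finset.univ.erase 0, b i = 1)
    (hb' : (∀ i : Fin (n + 1), i ≠ 0 → 0 < b' i) ∧ ∑ i ∈ Finset.univ.erase 0, b' i = 1)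
    (hne : ∃ i : Fin (n + 1), i ≠ 0 ∧ b i ≠ b' i) :
    (∃ x : Fin (n + 1) → Fin (n + 1) → ℝ, memPSCF b x ∧ ¬ memPSCF b' x) ∧
    (∃ x : Fin (n + 1) → Fin (n + 1) → ℝ, memPSCF b' x ∧ ¬ memPSCF b x) := by
  have hn3 : 3 ≤ n := by omega
  exact ⟨SCF.exists_memPSCF_not_memPSCF hn3 (fun i hi => (hb.1 i hi).le) hb.2 hb'.2 hne,
    SCF.exists_memPSCF_not_memPSCF hn3 (fun i hi => (hb'.1 i hi).le) hb'.2 hb.2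
      (hne.imp fun _ h => ⟨h.1, h.2.symm⟩)⟩
end

section
/- Let $b^k\in\mathbb{R}^{N_1}$ denote the $k$-th canonical vector for $k\in N_1$. Then $\bigcap_{k\in N_1}P_{\mathrm{SCF}}(b^k)=\{x\in P_{\mathrm{AP}} : \sum_{ij\in\delta^+(S)}x_{ij}\ge 1\ \text{for all}\ S\subseteq N_1,\ |S|\ge 2\}$, and this set equals $\bigcap_{b\in B}P_{\mathrm{SCF}}(b)$, the closure of all $b$-SCF formulations (which coincides with the Dantzig–Fulkerson–Johnson relaxation). -/
/-- The intersection of the formulations `P_SCF(bᵏ)` over the canonical vectors `bᵏ`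
equals the set cut out by the cut inequalities `∑_{ij∈δ⁺(S)} x_{ij} ≥ 1` (the DFJ
relaxation), and this set is the closure `⋂_{b ∈ B} P_SCF(b)`. -/
theorem stmt_18 (n : ℕ) (hn : 4 ≤ n + 1) (x : Fin (n + 1) → Fin (n + 1) → ℝ) :
    ((∀ k : Fin (n + 1), k ≠ 0 →
        memPSCF (fun i => if i = k then (1 : ℝ) else 0) x)
      ↔ (memPAP x ∧ ∀ S : Finset (Fin (n + 1)), (0 : Fin (n + 1)) ∉ S → 2 ≤ S.card →
          1 ≤ ∑ i ∈ S, ∑ j ∈ Sᶜ, x i j)) ∧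
    ((∀ k : Fin (n + 1), k ≠ 0 →
        memPSCF (fun i => if i = k then (1 : ℝ) else 0) x)
      ↔ ∀ b : Fin (n + 1) → ℝ,
          ((∀ i : Fin (n + 1), i ≠ 0 → 0 < b i) ∧ ∑ i ∈ Finset.univ.erase 0, b i = 1) →
          memPSCF b x) := by
  have h10 : (1 : Fin (n + 1)) ≠ 0 := by
    intro e
    have := congrArg Fin.val e
    simp [Fin.val_one'] at this
    omega
  have key1 : (∀ k : Fin (n + 1), k ≠ 0 →
        memPSCF (fun i => if i = k then (1 : ℝ) else 0) x)
      ↔ (memPAP x ∧ ∀ S : Finset (Fin (n + 1)), (0 : Fin (n + 1)) ∉ S → 2 ≤ S.card →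
          1 ≤ ∑ i ∈ S, ∑ j ∈ Sᶜ, x i j) := by
    constructor
    · intro h
      refine ⟨(h 1 h10).1, ?_⟩
      intro S h0 h2
      obtain ⟨k, hk⟩ := Finset.card_pos.mp (by omega : 0 < S.card)
      have hk0 : k ≠ 0 := fun e => h0 (e ▸ hk)
      have := (h k hk0).2 S h0 h2
      rwa [Finset.sum_ite_eq' S k (fun _ => (1:ℝ)), if_pos hk] at this
    · rintro ⟨hAP, hcut⟩ k hk
      refine ⟨hAP, ?_⟩
      intro S h0 h2
      rw [Finset.sum_ite_eq' S k (fun _ => (1:ℝ))]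
      by_cases hkS : k ∈ S
      · rw [if_pos hkS]; exact hcut S h0 h2
      · rw [if_neg hkS]
        apply Finset.sum_nonneg; intro i hi
        apply Finset.sum_nonneg; intro j hj
        exact (hAP.1 i j (by rintro rfl; exact (Finset.mem_compl.mp hj) hi)).1
  refine ⟨key1, key1.trans ?_⟩
  constructor
  · rintro ⟨hAP, hcut⟩ b ⟨hbpos, hbsum⟩
    refine ⟨hAP, ?_⟩
    intro S h0 h2
    have hsub : S ⊆ Finset.univ.erase 0 := fun i hi =>
      Finset.mem_erase.mpr ⟨fun e => h0 (e ▸ hi), Finset.mem_univ i⟩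
    calc ∑ i ∈ S, b i ≤ ∑ i ∈ Finset.univ.erase 0, b i :=
          Finset.sum_le_sum_of_subset_of_nonneg hsub
            (fun i hi _ => le_of_lt (hbpos i (Finset.mem_erase.mp hi).1))
      _ = 1 := hbsum
      _ ≤ _ := hcut S h0 h2
  · intro h
    have hncard : (Finset.univ.erase (0 : Fin (n+1))).card = n := by
      rw [Finset.card_erase_of_mem (Finset.mem_univ _), Finset.card_univ, Fintype.card_fin]
      omega
    have hn0 : (0:ℝ) < (n:ℝ) := by
      have : 3 ≤ n := by omega
      exact_mod_cast Nat.lt_of_lt_of_le (by norm_num) this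
    have hbunif : (∀ i : Fin (n+1), i ≠ 0 → 0 < (fun i : Fin (n+1) => if i = 0 then (0:ℝ) else 1/n) i) ∧
        ∑ i ∈ Finset.univ.erase 0, (fun i : Fin (n+1) => if i = 0 then (0:ℝ) else 1/n) i = 1 := by
      constructor
      · intro i hi
        simp only [if_neg hi]
        positivity
      · rw [Finset.sum_congr rfl (fun i hi => if_neg (Finset.mem_erase.mp hi).1),
          Finset.sum_const, hncard, nsmul_eq_mul]
        field_simp
    constructor
    · exact (h _ hbunif).1
    · intro S h0 h2
      have hsub : S ⊆ Finset.univ.erase 0 := fun i hi =>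
        Finset.mem_erase.mpr ⟨fun e => h0 (e ▸ hi), Finset.mem_univ i⟩
      have hScard : (0:ℝ) < S.card := by exact_mod_cast Nat.lt_of_lt_of_le (by norm_num) h2
      rcases eq_or_ne (Finset.univ.erase (0 : Fin (n+1)) \ S) ∅ with hT | hT
      · have hSeq : S = Finset.univ.erase 0 :=
          Finset.Subset.antisymm hsub (Finset.sdiff_eq_empty_iff_subset.mp hT)
        have := (h _ hbunif).2 S h0 h2
        calc (1:ℝ) = ∑ i ∈ S, (fun i : Fin (n+1) => if i = 0 then (0:ℝ) else 1/n) i := by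
              rw [hSeq]; exact hbunif.2.symm
          _ ≤ _ := this
      · set T := Finset.univ.erase (0 : Fin (n+1)) \ S with hTdef
        have hm : (0:ℝ) < T.card := by
          have : T.Nonempty := Finset.nonempty_iff_ne_empty.mpr hT
          exact_mod_cast Finset.card_pos.mpr this
        refine le_of_forall_pos_le_add ?_
        intro ε hε
        set δ : ℝ := min ε 1 / 2 with hδdef
        have hδ0 : 0 < δ := by
          have := lt_min hε one_pos
          rw [hδdef]; linarith
        have hδ1 : δ < 1 := by
          have := min_le_right ε 1
          rw [hδdef]; linarith
        have hδε : δ ≤ ε := by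
          have := min_le_left ε 1
          rw [hδdef]; linarith
        set b : Fin (n+1) → ℝ := fun i =>
          if i ∈ S then (1-δ)/S.card else if i = 0 then 0 else δ/T.card with hbdef
        have hSsum : ∑ i ∈ S, b i = 1 - δ := by
          rw [Finset.sum_congr rfl (fun i hi => if_pos hi), Finset.sum_const, nsmul_eq_mul,
            mul_div_cancel₀ _ (ne_of_gt hScard)]
        have hb : (∀ i : Fin (n+1), i ≠ 0 → 0 < b i) ∧ ∑ i ∈ Finset.univ.erase 0, b i = 1 := by
          constructor
          · intro i hi
            by_cases hiS : i ∈ S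
            · rw [hbdef]; simp only [if_pos hiS]
              apply div_pos (by linarith) hScard
            · rw [hbdef]; simp only [if_neg hiS, if_neg hi]
              exact div_pos hδ0 hm
          · rw [← Finset.sum_sdiff hsub, ← hTdef, hSsum]
            have hTsum : ∑ i ∈ T, b i = δ := by
              have heq : ∀ i ∈ T, b i = δ / T.card := by
                intro i hi
                have h1 : i ∉ S := (Finset.mem_sdiff.mp hi).2
                have h2' : i ≠ 0 := (Finset.mem_erase.mp (Finset.mem_sdiff.mp hi).1).1
                simp only [hbdef, if_neg h1, if_neg h2']
              rw [Finset.sum_congr rfl heq, Finset.sum_const, nsmul_eq_mul,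
                mul_div_cancel₀ _ (ne_of_gt hm)]
            rw [hTsum]; ring
        have := (h b hb).2 S h0 h2
        rw [hSsum] at this
        linarith
end
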